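/- arXiv:1809.04307 — 3 statements merged into one kernel-verified Lean document; each statement's English description precedes it below -/
import Mathlib

section
/- Let α ∈ (0, 1/2), let θ̃ be the unique solution in (0, π/2) of θ̃ = 2α·tan θ̃, and let Θ : [0, ∞) → ℝ^N be a global classical solution of the singular weighted Kuramoto system with D(Θ(0)) < D^∞ for some D^∞ < θ̃. If the coupling strength satisfies K > D(Θ̇(0)) / (h′(D^∞)·(D^∞ − D(Θ(0)))), then the frequency diameter decays exponentially, D(Θ̇(t)) ≤ D(Θ̇(0))·e^{−K·h′(D^∞)·t} for all t ≥ 0, and a phase-locked state emerges: for all i, j the limit θ_{ij}^∞ = lim_{t→∞} (θ_i(t) − θ_j(t)) exists. -/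
open Real Set Filter Topology MeasureTheory

/-- The orthodromic distance of `θ` to `0` on the circle: `|θ̄|` where
`θ̄ ≡ θ (mod 2π)`, `θ̄ ∈ (−π, π]`. -/
noncomputable def orthoDist (θ : ℝ) : ℝ := |θ - 2 * Real.pi * (round (θ / (2 * Real.pi)) : ℝ)|

/-- The singular interaction kernel `h(θ) = sin θ / |θ|_o^{2α}` (equal to `0` on `2πℤ`,
by the junk value convention `x / 0 = 0`). -/
noncomputable def hker (α θ : ℝ) : ℝ := Real.sin θ / orthoDist θ ^ (2 * α)
/-- The Kuramoto vector field `H_i(Θ) = Ω_i + (K/N) ∑_j h(θ_j − θ_i)`. -/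
noncomputable def Hvec (N : ℕ) (K α : ℝ) (Ω : Fin N → ℝ)
    (Θ : EuclideanSpace ℝ (Fin N)) : EuclideanSpace ℝ (Fin N) :=
  WithLp.toLp 2 (fun i => Ω i + (K / (N : ℝ)) * ∑ j, hker α (Θ j - Θ i))
/-- A global classical solution of the singular weighted Kuramoto system on `[0, ∞)`:
`θ̇_i = Ω_i + (K/N) ∑_j h(θ_j − θ_i)` at every `t ≥ 0`. -/
def IsKuramotoSol (N : ℕ) (K α : ℝ) (Ω : Fin N → ℝ)
    (Θ : ℝ → EuclideanSpace ℝ (Fin N)) : Prop :=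
  ∀ t ∈ Set.Ici (0 : ℝ), ∀ i, HasDerivWithinAt (fun s => Θ s i)
    (Ω i + (K / (N : ℝ)) * ∑ j, hker α (Θ t j - Θ t i)) (Set.Ici (0 : ℝ)) t
/-- The phase diameter `D(Θ) = max_i θ_i − min_i θ_i`. -/
noncomputable def diamN (N : ℕ) (Θ : EuclideanSpace ℝ (Fin N)) : ℝ :=
  (⨆ i, Θ i) - (⨅ i, Θ i)

/-- The derivative of the singular kernel on `(0, π)`:
`h′(θ) = cos θ/θ^{2α} − 2α·sin θ/θ^{2α+1}`. -/
noncomputable def hprime (α θ : ℝ) : ℝ :=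
  Real.cos θ / θ ^ (2 * α) - 2 * α * Real.sin θ / θ ^ (2 * α + 1)

/-! ### Auxiliary lemmas: the singular kernel -/

lemma orthoDist_eq_abs {θ : ℝ} (h : |θ| < π) : orthoDist θ = |θ| := by
  have h2π : (0:ℝ) < 2 * π := by positivity
  have h1 := abs_lt.mp h
  have hr : round (θ / (2 * π)) = 0 := by
    rw [round_eq_zero_iff]
    constructor
    · rw [le_div_iff₀ h2π]; nlinarith [h1.1]
    · rw [div_lt_iff₀ h2π]; nlinarith [h1.2]
  simp [orthoDist, hr]

lemma hker_zero (α : ℝ) : hker α 0 = 0 := by simp [hker]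

lemma hker_neg {α θ : ℝ} (h : |θ| < π) : hker α (-θ) = - hker α θ := by
  unfold hker
  rw [orthoDist_eq_abs (by rwa [abs_neg]), orthoDist_eq_abs h, abs_neg, Real.sin_neg, neg_div]

lemma hker_hasDerivAt {α θ : ℝ} (hθ : θ ∈ Set.Ioo 0 π) :
    HasDerivAt (hker α) (hprime α θ) θ := by
  obtain ⟨hθ0, hθπ⟩ := hθ
  have hP : (0:ℝ) < θ ^ (2*α) := Real.rpow_pos_of_pos hθ0 _
  have hd1 : HasDerivAt (fun x : ℝ => x ^ (2*α)) (2*α * θ^(2*α - 1)) θ :=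
    Real.hasDerivAt_rpow_const (Or.inl hθ0.ne')
  have hd : HasDerivAt (fun x => Real.sin x / x ^ (2*α))
      ((Real.cos θ * θ^(2*α) - Real.sin θ * (2*α*θ^(2*α - 1))) / (θ^(2*α))^2) θ :=
    (Real.hasDerivAt_sin θ).div hd1 hP.ne'
  have h1 : θ^(2*α - 1) = θ^(2*α)/θ := Real.rpow_sub_one hθ0.ne' _
  have h2 : θ^(2*α + 1) = θ^(2*α)*θ := Real.rpow_add_one hθ0.ne' _
  have heq : (Real.cos θ * θ^(2*α) - Real.sin θ * (2*α*θ^(2*α - 1))) / (θ^(2*α))^2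
      = hprime α θ := by
    rw [hprime, h1, h2]
    field_simp
  have hev : hker α =ᶠ[𝓝 θ] fun x => Real.sin x / x ^ (2*α) := by
    filter_upwards [Ioo_mem_nhds hθ0 hθπ] with x hx
    rw [hker, orthoDist_eq_abs (by rw [abs_of_pos hx.1]; exact hx.2), abs_of_pos hx.1]
  exact heq ▸ hd.congr_of_eventuallyEq hev
lemma hprime_hasDerivAt {α θ : ℝ} (hθ0 : 0 < θ) :
    HasDerivAt (hprime α)
      (-(4*α*θ*Real.cos θ + Real.sin θ*(θ^2 - 2*α*(2*α+1))) / θ^(2*α+2)) θ := by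
  have hP : (0:ℝ) < θ ^ (2*α) := Real.rpow_pos_of_pos hθ0 _
  have hP1 : (0:ℝ) < θ ^ (2*α+1) := Real.rpow_pos_of_pos hθ0 _
  have hdA : HasDerivAt (fun x : ℝ => Real.cos x / x ^ (2*α))
      ((-Real.sin θ * θ^(2*α) - Real.cos θ * (2*α*θ^(2*α - 1))) / (θ^(2*α))^2) θ :=
    (Real.hasDerivAt_cos θ).div (Real.hasDerivAt_rpow_const (Or.inl hθ0.ne')) hP.ne'
  have hdB : HasDerivAt (fun x : ℝ => 2*α*Real.sin x / x ^ (2*α+1))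
      ((2*α*Real.cos θ * θ^(2*α+1) - 2*α*Real.sin θ * ((2*α+1)*θ^(2*α+1-1))) / (θ^(2*α+1))^2) θ :=
    ((Real.hasDerivAt_sin θ).const_mul (2*α)).div
      (Real.hasDerivAt_rpow_const (Or.inl hθ0.ne')) hP1.ne'
  have h1 : θ^(2*α - 1) = θ^(2*α)/θ := Real.rpow_sub_one hθ0.ne' _
  have h1' : θ^(2*α + 1 - 1) = θ^(2*α) := by norm_num
  have h2 : θ^(2*α + 1) = θ^(2*α)*θ := Real.rpow_add_one hθ0.ne' _
  have h3 : θ^(2*α + 2) = θ^(2*α)*θ^2 := by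
    rw [Real.rpow_add hθ0]
    congr 1
    rw [show ((2:ℝ)) = ((2:ℕ):ℝ) by norm_num, Real.rpow_natCast]
  have := hdA.sub hdB
  have heq : ((-Real.sin θ * θ^(2*α) - Real.cos θ * (2*α*θ^(2*α - 1))) / (θ^(2*α))^2)
      - ((2*α*Real.cos θ * θ^(2*α+1) - 2*α*Real.sin θ * ((2*α+1)*θ^(2*α+1-1))) / (θ^(2*α+1))^2)
      = -(4*α*θ*Real.cos θ + Real.sin θ*(θ^2 - 2*α*(2*α+1))) / θ^(2*α+2) := by
    rw [h1, h1', h2, h3]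
    field_simp
    ring
  rw [heq] at this
  exact this

lemma qq_pos {α θ : ℝ} (hα : α ∈ Ioo (0:ℝ) (1/2)) (hθ : θ ∈ Ioo 0 (π/2)) :
    0 < 4*α*θ*Real.cos θ + Real.sin θ*(θ^2 - 2*α*(2*α+1)) := by
  set C := 2*α*(2*α+1) with hC
  have hQ : ∀ x : ℝ, HasDerivAt (fun x : ℝ => 4*α*(x*Real.cos x) + Real.sin x*(x^2 - C))
      (4*α*(Real.cos x - x*Real.sin x) + (Real.cos x*(x^2 - C) + Real.sin x*(2*x))) x := by
    intro x
    have h1 : HasDerivAt (fun x : ℝ => x*Real.cos x) (1*Real.cos x + x*(-Real.sin x)) x :=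
      (hasDerivAt_id x).mul (Real.hasDerivAt_cos x)
    have h2 : HasDerivAt (fun x : ℝ => x^2 - C) (2*x) x := by
      simpa using (hasDerivAt_pow 2 x).sub_const C
    have h3 : HasDerivAt (fun x : ℝ => Real.sin x*(x^2 - C))
        (Real.cos x*(x^2 - C) + Real.sin x*(2*x)) x := (Real.hasDerivAt_sin x).mul h2
    have := (h1.const_mul (4*α)).add h3
    refine this.congr_deriv ?_
    ring
  have hmono : StrictMonoOn (fun x : ℝ => 4*α*(x*Real.cos x) + Real.sin x*(x^2 - C))
      (Icc 0 (π/2)) := by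
    apply strictMonoOn_of_deriv_pos (convex_Icc _ _)
    · exact Continuous.continuousOn (by continuity)
    · intro x hx
      rw [interior_Icc] at hx
      rw [(hQ x).deriv]
      have hcos : 0 < Real.cos x := Real.cos_pos_of_mem_Ioo
        ⟨by linarith [hx.1, Real.pi_pos], hx.2⟩
      have hsin : 0 < Real.sin x := Real.sin_pos_of_pos_of_lt_pi hx.1
        (by linarith [Real.pi_pos, hx.2])
      have key : 4*α*(Real.cos x - x*Real.sin x) + (Real.cos x*(x^2 - C) + Real.sin x*(2*x))
          = Real.cos x*(x^2 + 2*α*(1-2*α)) + x*Real.sin x*(2-4*α) := by rw [hC]; ring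
      rw [key]
      have t1 : 0 < Real.cos x*(x^2 + 2*α*(1-2*α)) := by
        apply mul_pos hcos
        nlinarith [hα.1, hα.2, hx.1]
      have t2 : 0 < x*Real.sin x*(2-4*α) := by
        apply mul_pos (mul_pos hx.1 hsin)
        linarith [hα.2]
      linarith
  have h0 : (fun x : ℝ => 4*α*(x*Real.cos x) + Real.sin x*(x^2 - C)) 0 = 0 := by simp
  have := hmono (left_mem_Icc.2 (by linarith [Real.pi_pos, hθ.2])) ⟨hθ.1.le, hθ.2.le⟩ hθ.1
  rw [h0] at this
  calc (0:ℝ) < 4*α*(θ*Real.cos θ) + Real.sin θ*(θ^2 - C) := this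
  _ = 4*α*θ*Real.cos θ + Real.sin θ*(θ^2 - 2*α*(2*α+1)) := by rw [hC]; ring
lemma hprime_eq {α θ : ℝ} (hθ0 : 0 < θ) :
    hprime α θ = (θ*Real.cos θ - 2*α*Real.sin θ)/θ^(2*α+1) := by
  have h2 : θ^(2*α + 1) = θ^(2*α)*θ := Real.rpow_add_one hθ0.ne' _
  have hP : (0:ℝ) < θ ^ (2*α) := Real.rpow_pos_of_pos hθ0 _
  rw [hprime, h2]
  field_simp

lemma ufun_pos {α θt θ : ℝ} (hα : α ∈ Ioo (0:ℝ) (1/2)) (hθt : θt ∈ Ioo 0 (π/2))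
    (hθteq : θt = 2 * α * Real.tan θt) (hθ : θ ∈ Ioo 0 θt) :
    0 < θ*Real.cos θ - 2*α*Real.sin θ := by
  have hπ2 : (0:ℝ) < π/2 := by positivity
  have hd1 : ∀ x : ℝ, HasDerivAt (fun x : ℝ => x*Real.cos x - 2*α*Real.sin x)
      ((1-2*α)*Real.cos x - x*Real.sin x) x := by
    intro x
    have h1 : HasDerivAt (fun x : ℝ => x*Real.cos x) (1*Real.cos x + x*(-Real.sin x)) x :=
      (hasDerivAt_id x).mul (Real.hasDerivAt_cos x)
    have h2 : HasDerivAt (fun x : ℝ => 2*α*Real.sin x) (2*α*Real.cos x) x :=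
      (Real.hasDerivAt_sin x).const_mul (2*α)
    have := h1.sub h2
    refine this.congr_deriv ?_; ring
  have hderiv1 : deriv (fun x : ℝ => x*Real.cos x - 2*α*Real.sin x)
      = fun x => (1-2*α)*Real.cos x - x*Real.sin x := by
    funext x; exact (hd1 x).deriv
  have hconc : StrictConcaveOn ℝ (Icc 0 θt) (fun x : ℝ => x*Real.cos x - 2*α*Real.sin x) := by
    apply strictConcaveOn_of_deriv2_neg (convex_Icc _ _)
    · exact ((continuous_id.mul Real.continuous_cos).sub (continuous_const.mul Real.continuous_sin)).continuousOn
    · intro x hx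
      rw [interior_Icc] at hx
      have hd2 : HasDerivAt (fun x => (1-2*α)*Real.cos x - x*Real.sin x)
          (-((2-2*α)*Real.sin x + x*Real.cos x)) x := by
        have h1 : HasDerivAt (fun x : ℝ => (1-2*α)*Real.cos x) ((1-2*α)*(-Real.sin x)) x :=
          (Real.hasDerivAt_cos x).const_mul _
        have h2 : HasDerivAt (fun x : ℝ => x*Real.sin x) (1*Real.sin x + x*Real.cos x) x :=
          (hasDerivAt_id x).mul (Real.hasDerivAt_sin x)
        have := h1.sub h2
        refine this.congr_deriv ?_; ring
      have he : deriv^[2] (fun x : ℝ => x*Real.cos x - 2*α*Real.sin x) x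
          = -((2-2*α)*Real.sin x + x*Real.cos x) := by
        rw [Function.iterate_succ_apply', Function.iterate_one, hderiv1]
        exact hd2.deriv
      rw [he]
      have hsin : 0 < Real.sin x := Real.sin_pos_of_pos_of_lt_pi hx.1
        (by linarith [hθt.2, Real.pi_pos, hx.2])
      have hcos : 0 < Real.cos x := Real.cos_pos_of_mem_Ioo
        ⟨by linarith [Real.pi_pos, hx.1], by linarith [hθt.2, hx.2]⟩
      nlinarith [hα.2, hx.1]
  have hU0 : (fun x : ℝ => x*Real.cos x - 2*α*Real.sin x) 0 = 0 := by simp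
  have hUθt : (fun x : ℝ => x*Real.cos x - 2*α*Real.sin x) θt = 0 := by
    have hcos : 0 < Real.cos θt := Real.cos_pos_of_mem_Ioo
      ⟨by linarith [Real.pi_pos, hθt.1], hθt.2⟩
    have : θt * Real.cos θt = 2*α*Real.sin θt := by
      rw [Real.tan_eq_sin_div_cos] at hθteq
      field_simp at hθteq
      linarith [hθteq]
    simp only []
    linarith [this]
  -- θ = a • 0 + b • θt with b = θ/θt
  have hθt0 : 0 < θt := hθt.1
  set b := θ/θt with hb
  have hb0 : 0 < b := div_pos hθ.1 hθt0
  have hb1 : b < 1 := (div_lt_one hθt0).2 hθ.2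
  have ha0 : 0 < 1 - b := by linarith
  have hcomb : (1-b) • (0:ℝ) + b • θt = θ := by
    simp [smul_eq_mul, hb]
    field_simp
  have := hconc.2 (left_mem_Icc.2 hθt0.le) (right_mem_Icc.2 hθt0.le)
    hθt0.ne ha0 hb0 (by ring)
  rw [hcomb, hU0, hUθt] at this
  simpa using this

lemma hprime_pos {α θt θ : ℝ} (hα : α ∈ Ioo (0:ℝ) (1/2)) (hθt : θt ∈ Ioo 0 (π/2))
    (hθteq : θt = 2 * α * Real.tan θt) (hθ : θ ∈ Ioo 0 θt) :
    0 < hprime α θ :=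
  (hprime_eq hθ.1) ▸ div_pos (ufun_pos hα hθt hθteq hθ) (Real.rpow_pos_of_pos hθ.1 _)
lemma hprime_anti {α : ℝ} (hα : α ∈ Ioo (0:ℝ) (1/2)) :
    StrictAntiOn (hprime α) (Ioo 0 (π/2)) := by
  apply strictAntiOn_of_deriv_neg (convex_Ioo _ _)
  · exact fun x hx => (hprime_hasDerivAt hx.1).continuousAt.continuousWithinAt
  · intro x hx
    rw [interior_Ioo] at hx
    rw [(hprime_hasDerivAt hx.1).deriv]
    apply div_neg_of_neg_of_pos
    · have := qq_pos hα hx; linarith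
    · exact Real.rpow_pos_of_pos hx.1 _

lemma hprime_ge {α c x : ℝ} (hα : α ∈ Ioo (0:ℝ) (1/2)) (hc : c ∈ Ioo 0 (π/2))
    (hx0 : 0 < x) (hxc : x ≤ c) : hprime α c ≤ hprime α x := by
  rcases eq_or_lt_of_le hxc with h | h
  · exact le_of_eq (by rw [h])
  · exact (hprime_anti hα ⟨hx0, lt_trans h hc.2⟩ hc h).le

lemma hker_contOn {α c : ℝ} (hα : α ∈ Ioo (0:ℝ) (1/2)) (hc : c ∈ Ioo 0 (π/2)) :
    ContinuousOn (hker α) (Icc 0 c) := by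
  have hcπ : c < π := by linarith [hc.2, Real.pi_pos]
  intro x hx
  rcases eq_or_lt_of_le hx.1 with h0 | h0
  · -- x = 0
    have hval : hker α x = 0 := by rw [← h0]; exact hker_zero α
    rw [ContinuousWithinAt, hval, ← h0]
    have hbound : ∀ t ∈ Icc (0:ℝ) c, hker α t ≤ t ^ ((1:ℝ)-2*α) ∧ 0 ≤ hker α t := by
      intro t ht
      rcases eq_or_lt_of_le ht.1 with ht0 | ht0
      · rw [← ht0]
        simp [hker_zero, Real.zero_rpow (by linarith [hα.2] : (1:ℝ)-2*α ≠ 0)]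
      · have htπ : |t| < π := by rw [abs_of_pos ht0]; linarith [ht.2]
        have heq : hker α t = Real.sin t / t ^ (2*α) := by
          rw [hker, orthoDist_eq_abs htπ, abs_of_pos ht0]
        have hsin0 : 0 ≤ Real.sin t := Real.sin_nonneg_of_nonneg_of_le_pi ht.1 (by linarith [ht.2])
        have hpow : (0:ℝ) < t ^ (2*α) := Real.rpow_pos_of_pos ht0 _
        constructor
        · rw [heq]
          have h1 : Real.sin t ≤ t := Real.sin_le ht.1
          have h2 : Real.sin t / t ^ (2*α) ≤ t / t ^ (2*α) := by
            exact div_le_div_of_nonneg_right h1 hpow.le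
          have h3 : t / t ^ (2*α) = t ^ ((1:ℝ)-2*α) := by
            rw [Real.rpow_sub ht0, Real.rpow_one]
          linarith [h2, h3.le, h3.ge]
        · rw [heq]; positivity
    apply squeeze_zero' (Filter.eventually_of_mem self_mem_nhdsWithin
      (fun t ht => (hbound t ht).2)) (Filter.eventually_of_mem self_mem_nhdsWithin
      (fun t ht => (hbound t ht).1))
    have hcont : ContinuousAt (fun x : ℝ => x ^ ((1:ℝ)-2*α)) 0 :=
      Real.continuousAt_rpow_const 0 _ (Or.inr (by linarith [hα.2]))
    have := hcont.continuousWithinAt (s := Icc (0:ℝ) c)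
    rw [ContinuousWithinAt] at this
    simpa [Real.zero_rpow (by linarith [hα.2] : (1:ℝ)-2*α ≠ 0)] using this
  · exact ((hker_hasDerivAt ⟨h0, lt_of_le_of_lt hx.2 hcπ⟩).continuousAt).continuousWithinAt

lemma hker_strong_mono {α c : ℝ} (hα : α ∈ Ioo (0:ℝ) (1/2)) (hc : c ∈ Ioo 0 (π/2))
    {a b : ℝ} (ha : |a| ≤ c) (hb : |b| ≤ c) (hab : a ≤ b) :
    hprime α c * (b - a) ≤ hker α b - hker α a := by
  have hcπ : c < π := by linarith [hc.2, Real.pi_pos]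
  set m := hprime α c with hm
  have hgmono : MonotoneOn (fun θ => hker α θ - m*θ) (Icc 0 c) := by
    apply monotoneOn_of_deriv_nonneg (convex_Icc 0 c)
    · exact (hker_contOn hα hc).sub (continuous_const.mul continuous_id).continuousOn
    · intro x hx
      rw [interior_Icc] at hx
      exact ((hker_hasDerivAt ⟨hx.1, lt_trans hx.2 hcπ⟩).sub
        ((hasDerivAt_id x).const_mul m)).differentiableAt.differentiableWithinAt
    · intro x hx
      rw [interior_Icc] at hx
      have hd : HasDerivAt (fun θ => hker α θ - m*θ) (hprime α x - m*1) x :=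
        (hker_hasDerivAt ⟨hx.1, lt_trans hx.2 hcπ⟩).sub ((hasDerivAt_id x).const_mul m)
      rw [hd.deriv]
      have := hprime_ge hα hc hx.1 hx.2.le
      rw [← hm] at this
      linarith
  have hgodd : ∀ x : ℝ, |x| ≤ c → (fun θ => hker α θ - m*θ) (-x) = -((fun θ => hker α θ - m*θ) x) := by
    intro x hx
    simp only []
    rw [hker_neg (lt_of_le_of_lt hx hcπ)]
    ring
  have hg0 : (fun θ => hker α θ - m*θ) 0 = 0 := by simp [hker_zero]
  have key : ∀ x y : ℝ, |x| ≤ c → |y| ≤ c → x ≤ y →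
      (fun θ => hker α θ - m*θ) x ≤ (fun θ => hker α θ - m*θ) y := by
    intro x y hx hy hxy
    rcases le_or_gt 0 x with h0x | h0x
    · exact hgmono ⟨h0x, (abs_le.1 hx).2⟩ ⟨le_trans h0x hxy, (abs_le.1 hy).2⟩ hxy
    · rcases le_or_gt y 0 with h0y | h0y
      · have hyc : |(-y)| ≤ c := by rwa [abs_neg]
        have hxc : |(-x)| ≤ c := by rwa [abs_neg]
        have h1 : (fun θ => hker α θ - m*θ) (-y) ≤ (fun θ => hker α θ - m*θ) (-x) :=
          hgmono ⟨neg_nonneg.2 h0y, (abs_le.1 hyc).2⟩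
            ⟨(neg_pos.2 h0x).le, (abs_le.1 hxc).2⟩ (neg_le_neg hxy)
        have h3 := hgodd x hx
        have h4 := hgodd y hy
        simp only [] at h1 h3 h4 ⊢
        linarith
      · have h1 : (fun θ => hker α θ - m*θ) 0 ≤ (fun θ => hker α θ - m*θ) (-x) :=
          hgmono ⟨le_refl 0, hc.1.le⟩ ⟨(neg_pos.2 h0x).le, (abs_le.1 (by rwa [abs_neg] : |(-x)| ≤ c)).2⟩ (neg_pos.2 h0x).le
        have h2 : (fun θ => hker α θ - m*θ) 0 ≤ (fun θ => hker α θ - m*θ) y :=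
          hgmono ⟨le_refl 0, hc.1.le⟩ ⟨h0y.le, (abs_le.1 hy).2⟩ h0y.le
        have h3 := hgodd x hx
        rw [hg0] at h1 h2
        simp only [] at h1 h2 h3 ⊢
        linarith
  have := key a b ha hb hab
  simp only [] at this
  linarith

/-! ### Auxiliary lemmas: finite sup/inf machinery -/

noncomputable def fsup {N : ℕ} [NeZero N] (g : Fin N → ℝ) : ℝ :=
  Finset.univ.sup' Finset.univ_nonempty g

noncomputable def finf {N : ℕ} [NeZero N] (g : Fin N → ℝ) : ℝ :=
  Finset.univ.inf' Finset.univ_nonempty g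

section FS
variable {N : ℕ} [NeZero N]

lemma le_fsup {g : Fin N → ℝ} (i : Fin N) : g i ≤ fsup g :=
  Finset.le_sup' g (Finset.mem_univ i)

lemma fsup_le {g : Fin N → ℝ} {a : ℝ} (h : ∀ i, g i ≤ a) : fsup g ≤ a :=
  Finset.sup'_le _ _ (fun i _ => h i)

lemma finf_le {g : Fin N → ℝ} (i : Fin N) : finf g ≤ g i :=
  Finset.inf'_le g (Finset.mem_univ i)

lemma le_finf {g : Fin N → ℝ} {a : ℝ} (h : ∀ i, a ≤ g i) : a ≤ finf g :=
  Finset.le_inf' _ _ (fun i _ => h i)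

lemma finf_le_fsup {g : Fin N → ℝ} : finf g ≤ fsup g := by
  haveI : Nonempty (Fin N) := inferInstance
  exact le_trans (finf_le (Classical.arbitrary _)) (le_fsup _)

lemma diamN_eq (X : EuclideanSpace ℝ (Fin N)) :
    diamN N X = fsup (fun i => X i) - finf (fun i => X i) := by
  rw [diamN, fsup, finf, Finset.sup'_univ_eq_ciSup, Finset.inf'_univ_eq_ciInf]

end FS
section SupHelpers
variable {ι : Type*} {β : Type*}

lemma finset_sup'_continuousOn {S : Set ℝ} (s : Finset ι) (hs : s.Nonempty)
    (f : ι → ℝ → ℝ) (hf : ∀ i ∈ s, ContinuousOn (f i) S) :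
    ContinuousOn (fun u => s.sup' hs (fun i => f i u)) S := by
  revert hf
  induction hs using Finset.Nonempty.cons_induction with
  | singleton a => intro hf; simpa using hf a (Finset.mem_singleton_self a)
  | cons a s ha hs ih =>
      intro hf
      simp only [Finset.sup'_cons (H := hs)]
      exact ContinuousOn.sup (hf a (Finset.mem_cons_self a s))
        (ih (fun i hi => hf i (Finset.mem_cons_of_mem hi)))

lemma finset_inf'_continuousOn {S : Set ℝ} (s : Finset ι) (hs : s.Nonempty)
    (f : ι → ℝ → ℝ) (hf : ∀ i ∈ s, ContinuousOn (f i) S) :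
    ContinuousOn (fun u => s.inf' hs (fun i => f i u)) S := by
  revert hf
  induction hs using Finset.Nonempty.cons_induction with
  | singleton a => intro hf; simpa using hf a (Finset.mem_singleton_self a)
  | cons a s ha hs ih =>
      intro hf
      simp only [Finset.inf'_cons (H := hs)]
      exact ContinuousOn.inf (hf a (Finset.mem_cons_self a s))
        (ih (fun i hi => hf i (Finset.mem_cons_of_mem hi)))

lemma finset_sup'_tendsto {s : Finset ι} (hs : s.Nonempty) {l : Filter β}
    {F : ι → β → ℝ} {L : ι → ℝ} (h : ∀ i ∈ s, Tendsto (F i) l (𝓝 (L i))) :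
    Tendsto (fun u => s.sup' hs (fun i => F i u)) l (𝓝 (s.sup' hs L)) := by
  revert h
  induction hs using Finset.Nonempty.cons_induction with
  | singleton a => intro h; simpa using h a (Finset.mem_singleton_self a)
  | cons a s ha hs ih =>
      intro h
      simp only [Finset.sup'_cons (H := hs)]
      exact Filter.Tendsto.max (h a (Finset.mem_cons_self a s))
        (ih (fun i hi => h i (Finset.mem_cons_of_mem hi)))

lemma finset_inf'_tendsto {s : Finset ι} (hs : s.Nonempty) {l : Filter β}
    {F : ι → β → ℝ} {L : ι → ℝ} (h : ∀ i ∈ s, Tendsto (F i) l (𝓝 (L i))) :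
    Tendsto (fun u => s.inf' hs (fun i => F i u)) l (𝓝 (s.inf' hs L)) := by
  revert h
  induction hs using Finset.Nonempty.cons_induction with
  | singleton a => intro h; simpa using h a (Finset.mem_singleton_self a)
  | cons a s ha hs ih =>
      intro h
      simp only [Finset.inf'_cons (H := hs)]
      exact Filter.Tendsto.min (h a (Finset.mem_cons_self a s))
        (ih (fun i hi => h i (Finset.mem_cons_of_mem hi)))

end SupHelpers

section FS2
variable {N : ℕ} [NeZero N]

lemma fsup_continuousOn {S : Set ℝ} {f : Fin N → ℝ → ℝ} (hf : ∀ i, ContinuousOn (f i) S) :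
    ContinuousOn (fun u => fsup (fun i => f i u)) S :=
  finset_sup'_continuousOn _ _ f (fun i _ => hf i)

lemma finf_continuousOn {S : Set ℝ} {f : Fin N → ℝ → ℝ} (hf : ∀ i, ContinuousOn (f i) S) :
    ContinuousOn (fun u => finf (fun i => f i u)) S :=
  finset_inf'_continuousOn _ _ f (fun i _ => hf i)

lemma fsup_tendsto {β : Type*} {l : Filter β} {F : Fin N → β → ℝ} {L : Fin N → ℝ}
    (h : ∀ i, Tendsto (F i) l (𝓝 (L i))) :
    Tendsto (fun u => fsup (fun i => F i u)) l (𝓝 (fsup L)) :=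
  finset_sup'_tendsto _ (fun i _ => h i)

lemma finf_tendsto {β : Type*} {l : Filter β} {F : Fin N → β → ℝ} {L : Fin N → ℝ}
    (h : ∀ i, Tendsto (F i) l (𝓝 (L i))) :
    Tendsto (fun u => finf (fun i => F i u)) l (𝓝 (finf L)) :=
  finset_inf'_tendsto _ (fun i _ => h i)

end FS2

section Slope
variable {N : ℕ} [NeZero N]


lemma eventually_sup'_le (f : Fin N → ℝ → ℝ) (d : Fin N → ℝ) (t : ℝ)
    (hf : ∀ i, HasDerivWithinAt (f i) (d i) (Ici t) t) {c ε : ℝ} (hε : 0 < ε)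
    (hc : ∀ i, (∀ k, f k t ≤ f i t) → d i ≤ c) :
    ∀ᶠ u in 𝓝[>] t, fsup (fun i => f i u) ≤
      fsup (fun i => f i t) + (u - t) * (c + ε) := by
  set S : ℝ → ℝ := fun u => fsup (fun i => f i u) with hS
  have key : ∀ i : Fin N, ∀ᶠ u in 𝓝[>] t, f i u ≤ S t + (u - t) * (c + ε) := by
    intro i
    have hslope : Tendsto (slope (f i) t) (𝓝[>] t) (𝓝 (d i)) := by
      have := (hasDerivWithinAt_iff_tendsto_slope).1 (hf i)
      rwa [Set.Ici_sdiff_left] at this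
    have hfit : f i t ≤ S t := le_fsup (g := fun k => f k t) i
    by_cases hi : ∀ k, f k t ≤ f i t
    · have hdi : d i ≤ c := hc i hi
      have hev : ∀ᶠ u in 𝓝[>] t, slope (f i) t u < d i + ε :=
        hslope.eventually_lt_const (by linarith)
      filter_upwards [hev, self_mem_nhdsWithin] with u hu hut
      rw [slope_def_field, div_lt_iff₀ (sub_pos.2 hut)] at hu
      have hfit' : S t ≤ f i t := fsup_le hi
      nlinarith [sub_pos.2 (show t < u from hut)]
    · push_neg at hi
      obtain ⟨k, hk⟩ := hi
      have hgap : 0 < S t - f i t :=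
        sub_pos.2 (lt_of_lt_of_le hk (le_fsup (g := fun k => f k t) k))
      have hev : ∀ᶠ u in 𝓝[>] t, slope (f i) t u < d i + 1 :=
        hslope.eventually_lt_const (by linarith)
      have hlin : Tendsto (fun u => (u - t) * (d i + 1 - c - ε)) (𝓝[>] t) (𝓝 0) := by
        have : Tendsto (fun u : ℝ => (u - t) * (d i + 1 - c - ε)) (𝓝 t)
            (𝓝 ((t - t) * (d i + 1 - c - ε))) :=
          ((continuous_id.sub continuous_const).mul continuous_const).tendsto t
        simpa using this.mono_left nhdsWithin_le_nhds
      have hev2 : ∀ᶠ u in 𝓝[>] t, (u - t) * (d i + 1 - c - ε) < S t - f i t :=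
        hlin.eventually_lt_const hgap
      filter_upwards [hev, hev2, self_mem_nhdsWithin] with u hu h2 hut
      rw [slope_def_field, div_lt_iff₀ (sub_pos.2 hut)] at hu
      nlinarith [sub_pos.2 (show t < u from hut)]
  have hall : ∀ᶠ u in 𝓝[>] t, ∀ i : Fin N, f i u ≤ S t + (u - t) * (c + ε) :=
    eventually_all.2 key
  filter_upwards [hall] with u hu
  exact fsup_le hu

lemma eventually_inf'_ge (f : Fin N → ℝ → ℝ) (d : Fin N → ℝ) (t : ℝ)
    (hf : ∀ i, HasDerivWithinAt (f i) (d i) (Ici t) t) {c ε : ℝ} (hε : 0 < ε)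
    (hc : ∀ i, (∀ k, f i t ≤ f k t) → c ≤ d i) :
    ∀ᶠ u in 𝓝[>] t, finf (fun i => f i t) + (u - t) * (c - ε) ≤
      finf (fun i => f i u) := by
  have hneg := eventually_sup'_le (fun i u => -(f i u)) (fun i => -(d i)) t
    (fun i => (hf i).neg) hε (c := -c) (fun i hi => by
      have : ∀ k, f i t ≤ f k t := fun k => by have := hi k; simpa using this
      simpa using hc i this)
  have hsupneg : ∀ u : ℝ, fsup (fun i => -(f i u)) =
      -(finf (fun i => f i u)) := by
    intro u
    apply le_antisymm
    · exact fsup_le (fun i => neg_le_neg (finf_le i))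
    · obtain ⟨i, -, hi⟩ := Finset.exists_mem_eq_inf' (Finset.univ_nonempty) (fun i => f i u)
      have hi' : finf (fun i => f i u) = f i u := hi
      rw [hi']
      exact le_fsup (g := fun i => -f i u) i
  filter_upwards [hneg] with u hu
  simp only [hsupneg] at hu
  linarith

lemma eventually_slope_diam_lt (f : Fin N → ℝ → ℝ) (d : Fin N → ℝ) (t : ℝ)
    (hf : ∀ i, HasDerivWithinAt (f i) (d i) (Ici t) t) {c₁ c₂ r : ℝ}
    (h1 : ∀ i, (∀ k, f k t ≤ f i t) → d i ≤ c₁)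
    (h2 : ∀ i, (∀ k, f i t ≤ f k t) → c₂ ≤ d i)
    (hr : c₁ - c₂ < r) :
    ∀ᶠ u in 𝓝[>] t, (u - t)⁻¹ *
      ((fsup (fun i => f i u)
        - finf (fun i => f i u))
      - (fsup (fun i => f i t)
        - finf (fun i => f i t))) < r := by
  have hε : (0:ℝ) < (r - (c₁ - c₂))/3 := by linarith
  filter_upwards [eventually_sup'_le f d t hf hε h1, eventually_inf'_ge f d t hf hε h2,
    self_mem_nhdsWithin] with u hsup hinf hut
  have hut' : (0:ℝ) < u - t := sub_pos.2 hut
  rw [inv_mul_lt_iff₀ hut']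
  nlinarith [hsup, hinf, hut']

end Slope

/-! ### The key contraction estimate for difference quotients -/

lemma sum_msw {N : ℕ} (m s b : ℝ) (w : Fin N → ℝ) :
    ∑ k, (m*(s*(w k - b))) = m*s*((∑ k, w k) - (N:ℝ)*b) := by
  calc ∑ k, m*(s*(w k - b)) = ∑ k, (m*s*(w k) - m*s*b) :=
        Finset.sum_congr rfl (fun k _ => by ring)
  _ = (∑ k, m*s*(w k)) - (∑ _k : Fin N, m*s*b) := Finset.sum_sub_distrib _ _
  _ = m*s*(∑ k, w k) - (N:ℝ)*(m*s*b) := by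
      rw [← Finset.mul_sum, Finset.sum_const, Finset.card_univ, Fintype.card_fin, nsmul_eq_mul]
  _ = m*s*((∑ k, w k) - (N:ℝ)*b) := by ring

lemma key_contraction {N : ℕ} [NeZero N] {K α : ℝ} {Ω : Fin N → ℝ}
    {Θ : ℝ → EuclideanSpace ℝ (Fin N)} (hK : 0 < K)
    (hsol : IsKuramotoSol N K α Ω Θ) {m Dinf : ℝ} (hm : 0 < m)
    (hsm : ∀ a b : ℝ, |a| ≤ Dinf → |b| ≤ Dinf → a ≤ b → m*(b-a) ≤ hker α b - hker α a)
    (habs : ∀ u : ℝ, ∀ i j : Fin N, |Θ u j - Θ u i| ≤ diamN N (Θ u))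
    {T s : ℝ} (hT : 0 ≤ T) (hs : 0 < s)
    (hconf : ∀ u ∈ Icc (0:ℝ) (T+s), diamN N (Θ u) ≤ Dinf) :
    ∀ τ ∈ Icc (0:ℝ) T,
      fsup (fun i => (Θ (τ+s) i - Θ τ i)/s) - finf (fun i => (Θ (τ+s) i - Θ τ i)/s) ≤
      (fsup (fun i => (Θ (0+s) i - Θ 0 i)/s) - finf (fun i => (Θ (0+s) i - Θ 0 i)/s))
        * Real.exp (-(K*m) * τ) := by
  have hNR : (0:ℝ) < (N:ℝ) := by
    exact_mod_cast Nat.pos_of_ne_zero (NeZero.ne N)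
  -- derivative of the difference quotients
  have hzd : ∀ x : ℝ, 0 ≤ x → ∀ i : Fin N,
      HasDerivWithinAt (fun τ => (Θ (τ+s) i - Θ τ i)/s)
        (((Ω i + (K / (N:ℝ)) * ∑ j, hker α (Θ (x+s) j - Θ (x+s) i))
          - (Ω i + (K / (N:ℝ)) * ∑ j, hker α (Θ x j - Θ x i)))/s) (Ici x) x := by
    intro x hx i
    have hxs : (0:ℝ) ≤ x + s := by linarith
    have h1 : HasDerivWithinAt (fun τ : ℝ => τ + s) 1 (Ici x) x :=
      (hasDerivWithinAt_id x _).add_const s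
    have h2 : HasDerivWithinAt (fun u => Θ u i)
        (Ω i + (K / (N:ℝ)) * ∑ j, hker α (Θ (x+s) j - Θ (x+s) i)) (Ici (x+s)) (x+s) :=
      (hsol (x+s) hxs i).mono (Ici_subset_Ici.mpr hxs)
    have hmaps : MapsTo (fun τ : ℝ => τ + s) (Ici x) (Ici (x+s)) :=
      fun u hu => add_le_add_left hu s
    have hcomp := HasDerivWithinAt.comp x h2 h1 hmaps
    have h3 : HasDerivWithinAt (fun u => Θ u i)
        (Ω i + (K / (N:ℝ)) * ∑ j, hker α (Θ x j - Θ x i)) (Ici x) x :=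
      (hsol x hx i).mono (Ici_subset_Ici.mpr hx)
    simpa [Function.comp] using (hcomp.sub h3).div_const s
  -- Gronwall
  have main := le_gronwallBound_of_liminf_deriv_right_le
    (f := fun τ => fsup (fun i => (Θ (τ+s) i - Θ τ i)/s)
      - finf (fun i => (Θ (τ+s) i - Θ τ i)/s))
    (f' := fun x => -(K*m) * (fsup (fun i => (Θ (x+s) i - Θ x i)/s)
      - finf (fun i => (Θ (x+s) i - Θ x i)/s)))
    (δ := fsup (fun i => (Θ (0+s) i - Θ 0 i)/s) - finf (fun i => (Θ (0+s) i - Θ 0 i)/s))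
    (K := -(K*m)) (ε := 0) (a := 0) (b := T) ?_ ?_ le_rfl ?_
  · intro τ hτ
    have := main τ hτ
    rwa [gronwallBound_ε0, sub_zero] at this
  · -- continuity
    have hθc : ∀ i : Fin N, ContinuousOn (fun u => Θ u i) (Ici 0) := by
      intro i u hu
      exact (hsol u hu i).continuousWithinAt
    have hzc : ∀ i : Fin N, ContinuousOn (fun τ => (Θ (τ+s) i - Θ τ i)/s) (Icc 0 T) := by
      intro i
      apply ContinuousOn.div_const
      apply ContinuousOn.sub
      · apply (hθc i).comp (Continuous.continuousOn (by continuity))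
        intro u hu
        simp only [mem_Ici]
        have : (0:ℝ) ≤ u := hu.1
        linarith
      · exact (hθc i).mono (fun u hu => hu.1)
    exact (fsup_continuousOn hzc).sub (finf_continuousOn hzc)
  · -- slope estimate
    intro x hx r hr
    apply Filter.Eventually.frequently
    have hx0 : (0:ℝ) ≤ x := hx.1
    have hxconf : diamN N (Θ x) ≤ Dinf := hconf x ⟨hx0, by linarith [hx.2, hs.le]⟩
    have hxsconf : diamN N (Θ (x+s)) ≤ Dinf := hconf (x+s) ⟨by linarith, by linarith [hx.2]⟩
    -- the two one-sided bounds on the derivatives at extremal indices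
    have hdbound : ∀ (i : Fin N), (∀ k, (Θ (x+s) k - Θ x k)/s ≤ (Θ (x+s) i - Θ x i)/s) →
        ((Ω i + (K / (N:ℝ)) * ∑ j, hker α (Θ (x+s) j - Θ (x+s) i))
          - (Ω i + (K / (N:ℝ)) * ∑ j, hker α (Θ x j - Θ x i)))/s ≤
        K*m/(N:ℝ) * ((∑ k, (Θ (x+s) k - Θ x k)/s)
          - (N:ℝ) * ((Θ (x+s) i - Θ x i)/s)) := by
      intro i hi
      have hterm : ∀ j : Fin N,
          hker α (Θ (x+s) j - Θ (x+s) i) - hker α (Θ x j - Θ x i) ≤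
          m * (s * ((Θ (x+s) j - Θ x j)/s - (Θ (x+s) i - Θ x i)/s)) := by
        intro j
        have hba : Θ (x+s) j - Θ (x+s) i ≤ Θ x j - Θ x i := by
          have := hi j
          have h' := (div_le_div_iff_of_pos_right hs).mp this
          linarith
        have ha1 : |Θ x j - Θ x i| ≤ Dinf := le_trans (habs x i j) hxconf
        have ha2 : |Θ (x+s) j - Θ (x+s) i| ≤ Dinf := le_trans (habs (x+s) i j) hxsconf
        have := hsm _ _ ha2 ha1 hba
        have hrel : s * ((Θ (x+s) j - Θ x j)/s - (Θ (x+s) i - Θ x i)/s)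
            = (Θ (x+s) j - Θ (x+s) i) - (Θ x j - Θ x i) := by
          field_simp
          ring
        rw [hrel]
        linarith
      have hsum : ∑ j, (hker α (Θ (x+s) j - Θ (x+s) i) - hker α (Θ x j - Θ x i)) ≤
          ∑ j, m * (s * ((Θ (x+s) j - Θ x j)/s - (Θ (x+s) i - Θ x i)/s)) :=
        Finset.sum_le_sum (fun j _ => hterm j)
      rw [sum_msw] at hsum
      have hVd : (Ω i + (K / (N:ℝ)) * ∑ j, hker α (Θ (x+s) j - Θ (x+s) i))
          - (Ω i + (K / (N:ℝ)) * ∑ j, hker α (Θ x j - Θ x i))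
          = (K / (N:ℝ)) * ∑ j, (hker α (Θ (x+s) j - Θ (x+s) i) - hker α (Θ x j - Θ x i)) := by
        rw [Finset.sum_sub_distrib]
        ring
      have hKN : (0:ℝ) ≤ K / (N:ℝ) := by positivity
      have h5 : (Ω i + (K / (N:ℝ)) * ∑ j, hker α (Θ (x+s) j - Θ (x+s) i))
          - (Ω i + (K / (N:ℝ)) * ∑ j, hker α (Θ x j - Θ x i)) ≤
          (K / (N:ℝ)) * (m*s*((∑ k, (Θ (x+s) k - Θ x k)/s)
            - (N:ℝ)*((Θ (x+s) i - Θ x i)/s))) := by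
        rw [hVd]
        exact mul_le_mul_of_nonneg_left hsum hKN
      calc ((Ω i + (K / (N:ℝ)) * ∑ j, hker α (Θ (x+s) j - Θ (x+s) i))
          - (Ω i + (K / (N:ℝ)) * ∑ j, hker α (Θ x j - Θ x i)))/s ≤
          ((K / (N:ℝ)) * (m*s*((∑ k, (Θ (x+s) k - Θ x k)/s)
            - (N:ℝ)*((Θ (x+s) i - Θ x i)/s))))/s := by
            exact div_le_div_of_nonneg_right h5 hs.le
      _ = K*m/(N:ℝ) * ((∑ k, (Θ (x+s) k - Θ x k)/s)
            - (N:ℝ) * ((Θ (x+s) i - Θ x i)/s)) := by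
            field_simp
    have hdbound2 : ∀ (i : Fin N), (∀ k, (Θ (x+s) i - Θ x i)/s ≤ (Θ (x+s) k - Θ x k)/s) →
        K*m/(N:ℝ) * ((∑ k, (Θ (x+s) k - Θ x k)/s)
          - (N:ℝ) * ((Θ (x+s) i - Θ x i)/s)) ≤
        ((Ω i + (K / (N:ℝ)) * ∑ j, hker α (Θ (x+s) j - Θ (x+s) i))
          - (Ω i + (K / (N:ℝ)) * ∑ j, hker α (Θ x j - Θ x i)))/s := by
      intro i hi
      have hterm : ∀ j : Fin N,
          m * (s * ((Θ (x+s) j - Θ x j)/s - (Θ (x+s) i - Θ x i)/s)) ≤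
          hker α (Θ (x+s) j - Θ (x+s) i) - hker α (Θ x j - Θ x i) := by
        intro j
        have hba : Θ x j - Θ x i ≤ Θ (x+s) j - Θ (x+s) i := by
          have := hi j
          have h' := (div_le_div_iff_of_pos_right hs).mp this
          linarith
        have ha1 : |Θ x j - Θ x i| ≤ Dinf := le_trans (habs x i j) hxconf
        have ha2 : |Θ (x+s) j - Θ (x+s) i| ≤ Dinf := le_trans (habs (x+s) i j) hxsconf
        have := hsm _ _ ha1 ha2 hba
        have hrel : s * ((Θ (x+s) j - Θ x j)/s - (Θ (x+s) i - Θ x i)/s)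
            = (Θ (x+s) j - Θ (x+s) i) - (Θ x j - Θ x i) := by
          field_simp
          ring
        rw [hrel]
        linarith
      have hsum : ∑ j, m * (s * ((Θ (x+s) j - Θ x j)/s - (Θ (x+s) i - Θ x i)/s)) ≤
          ∑ j, (hker α (Θ (x+s) j - Θ (x+s) i) - hker α (Θ x j - Θ x i)) :=
        Finset.sum_le_sum (fun j _ => hterm j)
      rw [sum_msw] at hsum
      have hVd : (Ω i + (K / (N:ℝ)) * ∑ j, hker α (Θ (x+s) j - Θ (x+s) i))
          - (Ω i + (K / (N:ℝ)) * ∑ j, hker α (Θ x j - Θ x i))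
          = (K / (N:ℝ)) * ∑ j, (hker α (Θ (x+s) j - Θ (x+s) i) - hker α (Θ x j - Θ x i)) := by
        rw [Finset.sum_sub_distrib]
        ring
      have hKN : (0:ℝ) ≤ K / (N:ℝ) := by positivity
      have h5 : (K / (N:ℝ)) * (m*s*((∑ k, (Θ (x+s) k - Θ x k)/s)
            - (N:ℝ)*((Θ (x+s) i - Θ x i)/s))) ≤
          (Ω i + (K / (N:ℝ)) * ∑ j, hker α (Θ (x+s) j - Θ (x+s) i))
          - (Ω i + (K / (N:ℝ)) * ∑ j, hker α (Θ x j - Θ x i)) := by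
        rw [hVd]
        exact mul_le_mul_of_nonneg_left hsum hKN
      calc K*m/(N:ℝ) * ((∑ k, (Θ (x+s) k - Θ x k)/s)
            - (N:ℝ) * ((Θ (x+s) i - Θ x i)/s))
          = ((K / (N:ℝ)) * (m*s*((∑ k, (Θ (x+s) k - Θ x k)/s)
            - (N:ℝ)*((Θ (x+s) i - Θ x i)/s))))/s := by
            field_simp
      _ ≤ ((Ω i + (K / (N:ℝ)) * ∑ j, hker α (Θ (x+s) j - Θ (x+s) i))
          - (Ω i + (K / (N:ℝ)) * ∑ j, hker α (Θ x j - Θ x i)))/s :=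
            div_le_div_of_nonneg_right h5 hs.le
    apply eventually_slope_diam_lt (f := fun i τ => (Θ (τ+s) i - Θ τ i)/s)
      (d := fun i => ((Ω i + (K / (N:ℝ)) * ∑ j, hker α (Θ (x+s) j - Θ (x+s) i))
          - (Ω i + (K / (N:ℝ)) * ∑ j, hker α (Θ x j - Θ x i)))/s)
      (t := x) (fun i => hzd x hx0 i)
      (c₁ := K*m/(N:ℝ) * ((∑ k, (Θ (x+s) k - Θ x k)/s)
        - (N:ℝ) * fsup (fun k => (Θ (x+s) k - Θ x k)/s)))
      (c₂ := K*m/(N:ℝ) * ((∑ k, (Θ (x+s) k - Θ x k)/s)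
        - (N:ℝ) * finf (fun k => (Θ (x+s) k - Θ x k)/s)))
      ?_ ?_ ?_
    · intro i hi
      have hfs : fsup (fun k => (Θ (x+s) k - Θ x k)/s) = (Θ (x+s) i - Θ x i)/s :=
        le_antisymm (fsup_le hi) (le_fsup (g := fun k => (Θ (x+s) k - Θ x k)/s) i)
      rw [hfs]
      exact hdbound i hi
    · intro i hi
      have hfs : finf (fun k => (Θ (x+s) k - Θ x k)/s) = (Θ (x+s) i - Θ x i)/s :=
        le_antisymm (finf_le (g := fun k => (Θ (x+s) k - Θ x k)/s) i) (le_finf hi)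
      rw [hfs]
      exact hdbound2 i hi
    · have heq : K*m/(N:ℝ) * ((∑ k, (Θ (x+s) k - Θ x k)/s)
          - (N:ℝ) * fsup (fun k => (Θ (x+s) k - Θ x k)/s))
          - K*m/(N:ℝ) * ((∑ k, (Θ (x+s) k - Θ x k)/s)
          - (N:ℝ) * finf (fun k => (Θ (x+s) k - Θ x k)/s))
          = -(K*m) * (fsup (fun i => (Θ (x+s) i - Θ x i)/s)
            - finf (fun i => (Θ (x+s) i - Θ x i)/s)) := by
        field_simp
        ring
      rw [heq]
      exact hr
  · -- bound f' ≤ K f + ε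
    intro x hx
    exact le_of_eq (by ring)

/-! ### Exponential decay of the frequency diameter under confinement -/

lemma wbound {N : ℕ} [NeZero N] {K α : ℝ} {Ω : Fin N → ℝ}
    {Θ : ℝ → EuclideanSpace ℝ (Fin N)} (hK : 0 < K)
    (hsol : IsKuramotoSol N K α Ω Θ) {m Dinf : ℝ} (hm : 0 < m)
    (hsm : ∀ a b : ℝ, |a| ≤ Dinf → |b| ≤ Dinf → a ≤ b → m*(b-a) ≤ hker α b - hker α a)
    (habs : ∀ u : ℝ, ∀ i j : Fin N, |Θ u j - Θ u i| ≤ diamN N (Θ u))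
    {T δ : ℝ} (hT : 0 ≤ T) (hδ : 0 < δ)
    (hconf : ∀ u ∈ Icc (0:ℝ) (T+δ), diamN N (Θ u) ≤ Dinf) :
    fsup (fun i => Ω i + (K / (N:ℝ)) * ∑ j, hker α (Θ T j - Θ T i))
      - finf (fun i => Ω i + (K / (N:ℝ)) * ∑ j, hker α (Θ T j - Θ T i)) ≤
    (fsup (fun i => Ω i + (K / (N:ℝ)) * ∑ j, hker α (Θ 0 j - Θ 0 i))
      - finf (fun i => Ω i + (K / (N:ℝ)) * ∑ j, hker α (Θ 0 j - Θ 0 i)))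
      * Real.exp (-(K*m) * T) := by
  have hlim : ∀ τ : ℝ, 0 ≤ τ → ∀ i : Fin N,
      Tendsto (fun s => (Θ (τ+s) i - Θ τ i)/s) (𝓝[>] 0)
        (𝓝 (Ω i + (K / (N:ℝ)) * ∑ j, hker α (Θ τ j - Θ τ i))) := by
    intro τ hτ i
    have hder : HasDerivWithinAt (fun u => Θ u i)
        (Ω i + (K / (N:ℝ)) * ∑ j, hker α (Θ τ j - Θ τ i)) (Ici τ) τ :=
      (hsol τ hτ i).mono (Ici_subset_Ici.mpr hτ)
    have hslope : Tendsto (slope (fun u => Θ u i) τ) (𝓝[>] τ)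
        (𝓝 (Ω i + (K / (N:ℝ)) * ∑ j, hker α (Θ τ j - Θ τ i))) := by
      have := hasDerivWithinAt_iff_tendsto_slope.1 hder
      rwa [Set.Ici_sdiff_left] at this
    have hmap : Tendsto (fun s : ℝ => τ + s) (𝓝[>] 0) (𝓝[>] τ) := by
      apply tendsto_nhdsWithin_of_tendsto_nhds_of_eventually_within
      · have : Tendsto (fun s : ℝ => τ + s) (𝓝 0) (𝓝 (τ + 0)) :=
          (continuous_const.add continuous_id).tendsto 0
        simpa using this.mono_left nhdsWithin_le_nhds
      · filter_upwards [self_mem_nhdsWithin] with s hs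
        exact lt_add_of_pos_right τ hs
    have := hslope.comp hmap
    apply this.congr
    intro s
    simp only [Function.comp, slope_def_field]
    rw [add_sub_cancel_left]
  have hA : Tendsto (fun s => fsup (fun i => (Θ (T+s) i - Θ T i)/s)
      - finf (fun i => (Θ (T+s) i - Θ T i)/s)) (𝓝[>] 0)
      (𝓝 (fsup (fun i => Ω i + (K / (N:ℝ)) * ∑ j, hker α (Θ T j - Θ T i))
        - finf (fun i => Ω i + (K / (N:ℝ)) * ∑ j, hker α (Θ T j - Θ T i)))) :=
    (fsup_tendsto (fun i => hlim T hT i)).sub (finf_tendsto (fun i => hlim T hT i))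
  have hB : Tendsto (fun s => (fsup (fun i => (Θ (0+s) i - Θ 0 i)/s)
      - finf (fun i => (Θ (0+s) i - Θ 0 i)/s)) * Real.exp (-(K*m) * T)) (𝓝[>] 0)
      (𝓝 ((fsup (fun i => Ω i + (K / (N:ℝ)) * ∑ j, hker α (Θ 0 j - Θ 0 i))
        - finf (fun i => Ω i + (K / (N:ℝ)) * ∑ j, hker α (Θ 0 j - Θ 0 i)))
        * Real.exp (-(K*m) * T))) :=
    (((fsup_tendsto (fun i => hlim 0 le_rfl i)).sub
      (finf_tendsto (fun i => hlim 0 le_rfl i)))).mul_const _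
  have hev : ∀ᶠ s in 𝓝[>] (0:ℝ),
      fsup (fun i => (Θ (T+s) i - Θ T i)/s) - finf (fun i => (Θ (T+s) i - Θ T i)/s) ≤
      (fsup (fun i => (Θ (0+s) i - Θ 0 i)/s) - finf (fun i => (Θ (0+s) i - Θ 0 i)/s))
        * Real.exp (-(K*m) * T) := by
    filter_upwards [Ioo_mem_nhdsGT_of_mem (left_mem_Ico.2 hδ)] with s hs
    exact key_contraction hK hsol hm hsm habs hT hs.1
      (fun u hu => hconf u ⟨hu.1, by linarith [hu.2, hs.2]⟩) T ⟨hT, le_rfl⟩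
  exact le_of_tendsto_of_tendsto hA hB hev

lemma expAux {c lam : ℝ} (hlam : lam ≠ 0) (x : ℝ) :
    HasDerivAt (fun u : ℝ => (c/lam) * Real.exp (-lam*u)) (-(c * Real.exp (-lam*x))) x := by
  have h1 : HasDerivAt (fun u : ℝ => -lam*u) (-lam) x := by
    simpa using (hasDerivAt_id x).const_mul (-lam)
  have h2 := (h1.exp).const_mul (c/lam)
  refine h2.congr_deriv ?_
  field_simp

/-- for `α ∈ (0, 1/2)`, under the same diameter and coupling-strength
assumptions, the frequency diameter decays exponentially and a phase-locked state emerges. -/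
theorem statement15 (N : ℕ) (hN : 0 < N) (K α : ℝ) (hK : 0 < K)
    (hα : α ∈ Ioo (0 : ℝ) (1 / 2))
    (Ω : Fin N → ℝ) (Θ : ℝ → EuclideanSpace ℝ (Fin N))
    (hsol : IsKuramotoSol N K α Ω Θ)
    (θt : ℝ) (hθt : θt ∈ Ioo (0 : ℝ) (Real.pi / 2)) (hθteq : θt = 2 * α * Real.tan θt)
    (Dinf : ℝ) (hD0 : diamN N (Θ 0) < Dinf) (hDinf : Dinf < θt)
    (hKbig : K > diamN N (Hvec N K α Ω (Θ 0)) /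
      (hprime α Dinf * (Dinf - diamN N (Θ 0)))) :
    (∀ t ∈ Ici (0 : ℝ), diamN N (Hvec N K α Ω (Θ t)) ≤
      diamN N (Hvec N K α Ω (Θ 0)) * Real.exp (-K * hprime α Dinf * t)) ∧
    (∀ i j : Fin N, ∃ L : ℝ, Tendsto (fun t => Θ t i - Θ t j) atTop (nhds L)) := by
  haveI : NeZero N := ⟨hN.ne'⟩
  obtain ⟨hα0, hα2⟩ := hα
  -- basic quantities
  have hD0nn : (0:ℝ) ≤ diamN N (Θ 0) := by
    rw [diamN_eq]
    have := finf_le_fsup (g := fun i => Θ 0 i)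
    linarith
  have hDinf0 : 0 < Dinf := lt_of_le_of_lt hD0nn hD0
  have hDinfmem : Dinf ∈ Ioo 0 (π/2) := ⟨hDinf0, lt_trans hDinf hθt.2⟩
  have hm : 0 < hprime α Dinf := hprime_pos ⟨hα0, hα2⟩ hθt hθteq ⟨hDinf0, hDinf⟩
  set m := hprime α Dinf with hmdef
  have hlam : 0 < K*m := mul_pos hK hm
  have hsm : ∀ a b : ℝ, |a| ≤ Dinf → |b| ≤ Dinf → a ≤ b → m*(b-a) ≤ hker α b - hker α a :=
    fun a b ha hb hab => hker_strong_mono ⟨hα0, hα2⟩ hDinfmem ha hb hab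
  have habs : ∀ u : ℝ, ∀ i j : Fin N, |Θ u j - Θ u i| ≤ diamN N (Θ u) := by
    intro u i j
    rw [diamN_eq, abs_le]
    constructor
    · have h1 := le_fsup (g := fun k => Θ u k) i
      have h2 := finf_le (g := fun k => Θ u k) j
      simp only [] at h1 h2 ⊢
      linarith
    · have h1 := le_fsup (g := fun k => Θ u k) j
      have h2 := finf_le (g := fun k => Θ u k) i
      simp only [] at h1 h2 ⊢
      linarith
  have hWrw : ∀ u : ℝ, diamN N (Hvec N K α Ω (Θ u)) =
      fsup (fun i => Ω i + (K / (N:ℝ)) * ∑ j, hker α (Θ u j - Θ u i))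
      - finf (fun i => Ω i + (K / (N:ℝ)) * ∑ j, hker α (Θ u j - Θ u i)) :=
    fun u => diamN_eq (Hvec N K α Ω (Θ u))
  have hW0nn : (0:ℝ) ≤ diamN N (Hvec N K α Ω (Θ 0)) := by
    rw [hWrw 0]
    have := finf_le_fsup (g := fun i => Ω i + (K / (N:ℝ)) * ∑ j, hker α (Θ 0 j - Θ 0 i))
    linarith
  have hKbig' : diamN N (Hvec N K α Ω (Θ 0)) < K*m*(Dinf - diamN N (Θ 0)) := by
    have hpos : 0 < m * (Dinf - diamN N (Θ 0)) := mul_pos hm (by linarith)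
    have := (div_lt_iff₀ hpos).1 hKbig
    nlinarith
  have hmainineq : diamN N (Θ 0) + diamN N (Hvec N K α Ω (Θ 0))/(K*m) < Dinf := by
    have := (div_lt_iff₀ hlam).2 (by nlinarith : diamN N (Hvec N K α Ω (Θ 0)) < (Dinf - diamN N (Θ 0)) * (K*m))
    linarith
  -- continuity of coordinates and of the diameter
  have hθc : ∀ i : Fin N, ContinuousOn (fun u => Θ u i) (Ici 0) :=
    fun i u hu => (hsol u hu i).continuousWithinAt
  have hDrw : (fun u => diamN N (Θ u)) =
      fun u => fsup (fun i => Θ u i) - finf (fun i => Θ u i) :=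
    funext (fun u => diamN_eq _)
  have hDcont : ContinuousOn (fun u => diamN N (Θ u)) (Ici 0) := by
    rw [hDrw]
    exact (fsup_continuousOn hθc).sub (finf_continuousOn hθc)
  -- Gronwall estimate for the phase diameter under confinement
  have DG : ∀ b : ℝ, 0 ≤ b → ∀ δ : ℝ, 0 < δ →
      (∀ u ∈ Icc (0:ℝ) (b+δ), diamN N (Θ u) ≤ Dinf) →
      ∀ x ∈ Icc (0:ℝ) b, diamN N (Θ x) ≤
        diamN N (Θ 0) + diamN N (Hvec N K α Ω (Θ 0))/(K*m) := by
    intro b hb δ hδ hconf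
    have gron := le_gronwallBound_of_liminf_deriv_right_le
      (f := fun u => diamN N (Θ u)
        + (diamN N (Hvec N K α Ω (Θ 0))/(K*m)) * Real.exp (-(K*m)*u))
      (f' := fun _ => (0:ℝ))
      (δ := diamN N (Θ 0)
        + (diamN N (Hvec N K α Ω (Θ 0))/(K*m)) * Real.exp (-(K*m)*0))
      (K := 0) (ε := 0) (a := 0) (b := b) ?_ ?_ le_rfl ?_
    · intro x hx
      have h1 := gron x hx
      rw [gronwallBound_K0] at h1
      simp only [mul_zero, add_zero, neg_zero, zero_mul, Real.exp_zero, mul_one] at h1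
      have h2 : 0 ≤ (diamN N (Hvec N K α Ω (Θ 0))/(K*m)) * Real.exp (-(K*m)*x) :=
        mul_nonneg (div_nonneg hW0nn hlam.le) (Real.exp_pos _).le
      linarith
    · -- continuity
      apply ContinuousOn.add
      · exact hDcont.mono (fun u hu => hu.1)
      · exact (continuous_const.mul (Real.continuous_exp.comp
          (continuous_const.mul continuous_id))).continuousOn
    · -- slope estimate
      intro x hx r hr
      -- decay of the frequency diameter up to time x
      have hWx : fsup (fun i => Ω i + (K / (N:ℝ)) * ∑ j, hker α (Θ x j - Θ x i))
          - finf (fun i => Ω i + (K / (N:ℝ)) * ∑ j, hker α (Θ x j - Θ x i)) ≤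
          diamN N (Hvec N K α Ω (Θ 0)) * Real.exp (-(K*m)*x) := by
        have := wbound hK hsol hm hsm habs hx.1 (show (0:ℝ) < δ + (b - x) by linarith [hx.2])
          (fun u hu => hconf u ⟨hu.1, by linarith [hu.2]⟩)
        rw [hWrw 0]
        exact this
      have hE := expAux (c := diamN N (Hvec N K α Ω (Θ 0))) (lam := K*m) hlam.ne' x
      have hEslope : Tendsto (slope (fun u : ℝ =>
          (diamN N (Hvec N K α Ω (Θ 0))/(K*m)) * Real.exp (-(K*m)*u)) x) (𝓝[>] x)
          (𝓝 (-(diamN N (Hvec N K α Ω (Θ 0)) * Real.exp (-(K*m)*x)))) :=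
        (hasDerivAt_iff_tendsto_slope.1 hE).mono_left
          (nhdsWithin_mono x (fun u hu => ne_of_gt hu))
      have hev2 : ∀ᶠ u in 𝓝[>] x, slope (fun u : ℝ =>
          (diamN N (Hvec N K α Ω (Θ 0))/(K*m)) * Real.exp (-(K*m)*u)) x u <
          -(diamN N (Hvec N K α Ω (Θ 0)) * Real.exp (-(K*m)*x)) + r/2 :=
        hEslope.eventually_lt_const (by linarith)
      have hev1 := eventually_slope_diam_lt (f := fun i u => Θ u i)
        (d := fun i => Ω i + (K / (N:ℝ)) * ∑ j, hker α (Θ x j - Θ x i)) (t := x)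
        (fun i => (hsol x hx.1 i).mono (Ici_subset_Ici.mpr hx.1))
        (c₁ := fsup (fun i => Ω i + (K / (N:ℝ)) * ∑ j, hker α (Θ x j - Θ x i)))
        (c₂ := finf (fun i => Ω i + (K / (N:ℝ)) * ∑ j, hker α (Θ x j - Θ x i)))
        (fun i _ => le_fsup (g := fun i => Ω i + (K / (N:ℝ)) * ∑ j, hker α (Θ x j - Θ x i)) i)
        (fun i _ => finf_le (g := fun i => Ω i + (K / (N:ℝ)) * ∑ j, hker α (Θ x j - Θ x i)) i)
        (show _ < diamN N (Hvec N K α Ω (Θ 0)) * Real.exp (-(K*m)*x) + r/2 by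
          linarith [hWx])
      apply Filter.Eventually.frequently
      filter_upwards [hev1, hev2, self_mem_nhdsWithin] with u hu1 hu2 _
      have hsl : slope (fun u : ℝ =>
          (diamN N (Hvec N K α Ω (Θ 0))/(K*m)) * Real.exp (-(K*m)*u)) x u =
          (u - x)⁻¹ * ((diamN N (Hvec N K α Ω (Θ 0))/(K*m)) * Real.exp (-(K*m)*u)
            - (diamN N (Hvec N K α Ω (Θ 0))/(K*m)) * Real.exp (-(K*m)*x)) := by
        rw [slope_def_field, div_eq_inv_mul]
      rw [hsl] at hu2
      have hgoal : (u - x)⁻¹ * ((diamN N (Θ u)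
          + (diamN N (Hvec N K α Ω (Θ 0))/(K*m)) * Real.exp (-(K*m)*u))
          - (diamN N (Θ x)
          + (diamN N (Hvec N K α Ω (Θ 0))/(K*m)) * Real.exp (-(K*m)*x)))
          = (u - x)⁻¹ * ((fsup (fun i => Θ u i) - finf (fun i => Θ u i))
            - (fsup (fun i => Θ x i) - finf (fun i => Θ x i)))
          + (u - x)⁻¹ * ((diamN N (Hvec N K α Ω (Θ 0))/(K*m)) * Real.exp (-(K*m)*u)
            - (diamN N (Hvec N K α Ω (Θ 0))/(K*m)) * Real.exp (-(K*m)*x)) := by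
        rw [diamN_eq (Θ u), diamN_eq (Θ x)]
        ring
      rw [hgoal]
      linarith
    · intro x _
      simp
  -- bootstrap: global confinement
  have hboot : ∀ t : ℝ, 0 ≤ t → diamN N (Θ t) ≤
      (diamN N (Θ 0) + diamN N (Hvec N K α Ω (Θ 0))/(K*m) + Dinf)/2 := by
    set Dmid := (diamN N (Θ 0) + diamN N (Hvec N K α Ω (Θ 0))/(K*m) + Dinf)/2 with hDmiddef
    have hDmid1 : diamN N (Θ 0) + diamN N (Hvec N K α Ω (Θ 0))/(K*m) < Dmid := by
      rw [hDmiddef]; linarith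
    have hDmid2 : Dmid < Dinf := by rw [hDmiddef]; linarith
    have hD0mid : diamN N (Θ 0) < Dmid := by
      have : (0:ℝ) ≤ diamN N (Hvec N K α Ω (Θ 0))/(K*m) := div_nonneg hW0nn hlam.le
      linarith
    by_contra hcon
    push_neg at hcon
    obtain ⟨t0, ht0, ht0'⟩ := hcon
    set B := {t : ℝ | 0 ≤ t ∧ Dmid < diamN N (Θ t)} with hBdef
    have hBne : B.Nonempty := ⟨t0, ht0, ht0'⟩
    have hBbd : BddBelow B := ⟨0, fun t ht => ht.1⟩
    set t1 := sInf B with ht1def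
    have ht10 : 0 ≤ t1 := le_csInf hBne (fun t ht => ht.1)
    have hlt : ∀ u, 0 ≤ u → u < t1 → diamN N (Θ u) ≤ Dmid := by
      intro u hu hut
      by_contra hgt
      push_neg at hgt
      exact absurd (csInf_le hBbd ⟨hu, hgt⟩) (not_le.2 hut)
    have ht1le : diamN N (Θ t1) ≤ Dmid := by
      rcases eq_or_lt_of_le ht10 with h0 | h0
      · rw [← h0]; exact hD0mid.le
      · have hne : (𝓝[Ioo 0 t1] t1).NeBot := by
          rw [← mem_closure_iff_nhdsWithin_neBot, closure_Ioo h0.ne]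
          exact right_mem_Icc.2 h0.le
        have htt : Tendsto (fun u => diamN N (Θ u)) (𝓝[Ioo 0 t1] t1)
            (𝓝 (diamN N (Θ t1))) :=
          (hDcont t1 h0.le).tendsto.mono_left
            (nhdsWithin_mono t1 (fun u hu => hu.1.le))
        exact le_of_tendsto htt (Filter.eventually_of_mem self_mem_nhdsWithin
          (fun u hu => hlt u hu.1.le hu.2))
    have hevlt : ∀ᶠ u in 𝓝[Ici 0] t1, diamN N (Θ u) < Dinf :=
      (hDcont t1 ht10).tendsto.eventually_lt_const (by linarith)
    obtain ⟨ε, hε, hball⟩ := Metric.mem_nhdsWithin_iff.1 hevlt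
    have hconf : ∀ u ∈ Icc (0:ℝ) (t1 + ε/2), diamN N (Θ u) ≤ Dinf := by
      intro u hu
      rcases le_or_gt u t1 with h | h
      · rcases eq_or_lt_of_le h with he | hl
        · rw [he]; linarith
        · linarith [hlt u hu.1 hl]
      · apply le_of_lt
        apply hball
        constructor
        · rw [Metric.mem_ball, Real.dist_eq, abs_of_pos (by linarith : (0:ℝ) < u - t1)]
          linarith [hu.2, hε]
        · exact hu.1
    obtain ⟨bb, hbB, hblt⟩ := exists_lt_of_csInf_lt hBne
      (show sInf B < t1 + ε/4 by rw [← ht1def]; linarith)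
    have := DG (t1 + ε/4) (by linarith) (ε/4) (by linarith)
      (fun u hu => hconf u ⟨hu.1, by linarith [hu.2]⟩) bb ⟨hbB.1, hblt.le⟩
    linarith [hbB.2]
  have hconfg : ∀ u : ℝ, 0 ≤ u → diamN N (Θ u) ≤ Dinf := by
    intro u hu
    have := hboot u hu
    linarith
  constructor
  · -- part 1
    intro t ht
    have hw := wbound hK hsol hm hsm habs ht one_pos (fun u hu => hconfg u hu.1)
    rw [hWrw t, hWrw 0]
    have hexp : -K * m * t = -(K*m)*t := by ring
    rw [hexp]
    exact hw
  · -- part 2: phase-locking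
    intro i j
    have hVb : ∀ t : ℝ, 0 ≤ t →
        |(Ω i + (K / (N:ℝ)) * ∑ k, hker α (Θ t k - Θ t i))
          - (Ω j + (K / (N:ℝ)) * ∑ k, hker α (Θ t k - Θ t j))| ≤
        diamN N (Hvec N K α Ω (Θ 0)) * Real.exp (-(K*m)*t) := by
      intro t ht
      have hw := wbound hK hsol hm hsm habs ht one_pos (fun u hu => hconfg u hu.1)
      rw [← hWrw 0] at hw
      have h1 := le_fsup (g := fun k => Ω k + (K / (N:ℝ)) * ∑ l, hker α (Θ t l - Θ t k)) i
      have h2 := finf_le (g := fun k => Ω k + (K / (N:ℝ)) * ∑ l, hker α (Θ t l - Θ t k)) j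
      have h3 := le_fsup (g := fun k => Ω k + (K / (N:ℝ)) * ∑ l, hker α (Θ t l - Θ t k)) j
      have h4 := finf_le (g := fun k => Ω k + (K / (N:ℝ)) * ∑ l, hker α (Θ t l - Θ t k)) i
      simp only [] at h1 h2 h3 h4
      rw [abs_le]
      constructor <;> linarith
    have hEpos : ∀ u : ℝ, 0 ≤ (diamN N (Hvec N K α Ω (Θ 0))/(K*m)) * Real.exp (-(K*m)*u) :=
      fun u => mul_nonneg (div_nonneg hW0nn hlam.le) (Real.exp_pos _).le
    have hxd : ∀ t : ℝ, 0 ≤ t → HasDerivWithinAt (fun u => Θ u i - Θ u j)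
        ((Ω i + (K / (N:ℝ)) * ∑ k, hker α (Θ t k - Θ t i))
          - (Ω j + (K / (N:ℝ)) * ∑ k, hker α (Θ t k - Θ t j))) (Ici 0) t :=
      fun t ht => (hsol t ht i).sub (hsol t ht j)
    have hxc : ContinuousOn (fun u => Θ u i - Θ u j) (Ici 0) :=
      fun t ht => (hxd t ht).continuousWithinAt
    have hEc : Continuous (fun u : ℝ =>
        (diamN N (Hvec N K α Ω (Θ 0))/(K*m)) * Real.exp (-(K*m)*u)) :=
      continuous_const.mul (Real.continuous_exp.comp (continuous_const.mul continuous_id))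
    have hGanti : AntitoneOn (fun t => (Θ t i - Θ t j)
        + (diamN N (Hvec N K α Ω (Θ 0))/(K*m)) * Real.exp (-(K*m)*t)) (Ici 0) := by
      apply antitoneOn_of_deriv_nonpos (convex_Ici 0)
      · exact hxc.add hEc.continuousOn
      · intro t ht
        rw [interior_Ici] at ht
        exact (((hxd t ht.le).hasDerivAt (Ici_mem_nhds ht)).add
          (expAux hlam.ne' t)).differentiableAt.differentiableWithinAt
      · intro t ht
        rw [interior_Ici] at ht
        have hder := ((hxd t ht.le).hasDerivAt (Ici_mem_nhds ht)).add
          (expAux (c := diamN N (Hvec N K α Ω (Θ 0))) hlam.ne' t)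
        erw [hder.deriv]
        have h5 := abs_le.1 (hVb t ht.le)
        linarith [h5.2]
    have hGmono : MonotoneOn (fun t => (Θ t i - Θ t j)
        - (diamN N (Hvec N K α Ω (Θ 0))/(K*m)) * Real.exp (-(K*m)*t)) (Ici 0) := by
      apply monotoneOn_of_deriv_nonneg (convex_Ici 0)
      · exact hxc.sub hEc.continuousOn
      · intro t ht
        rw [interior_Ici] at ht
        exact (((hxd t ht.le).hasDerivAt (Ici_mem_nhds ht)).sub
          (expAux hlam.ne' t)).differentiableAt.differentiableWithinAt
      · intro t ht
        rw [interior_Ici] at ht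
        have hder := ((hxd t ht.le).hasDerivAt (Ici_mem_nhds ht)).sub
          (expAux (c := diamN N (Hvec N K α Ω (Θ 0))) hlam.ne' t)
        erw [hder.deriv]
        have h5 := abs_le.1 (hVb t ht.le)
        linarith [h5.1]
    have hanti' : Antitone (fun t : ℝ => (Θ (max t 0) i - Θ (max t 0) j)
        + (diamN N (Hvec N K α Ω (Θ 0))/(K*m)) * Real.exp (-(K*m)*(max t 0))) := by
      intro a b hab
      exact hGanti (le_max_right a 0) (le_max_right b 0) (max_le_max hab le_rfl)
    have hbdd : BddBelow (range (fun t : ℝ => (Θ (max t 0) i - Θ (max t 0) j)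
        + (diamN N (Hvec N K α Ω (Θ 0))/(K*m)) * Real.exp (-(K*m)*(max t 0)))) := by
      refine ⟨(Θ 0 i - Θ 0 j)
        - (diamN N (Hvec N K α Ω (Θ 0))/(K*m)) * Real.exp (-(K*m)*0), ?_⟩
      rintro y ⟨t, rfl⟩
      have h1 := hGmono (self_mem_Ici) (le_max_right t 0) (le_max_right t 0)
      have h2 := hEpos (max t 0)
      simp only [] at h1 ⊢
      linarith
    have htend := tendsto_atTop_ciInf hanti' hbdd
    have hexp : Tendsto (fun t : ℝ => Real.exp (-(K*m)*t)) atTop (𝓝 0) := by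
      have h1 : Tendsto (fun t : ℝ => (K*m)*t) atTop atTop :=
        tendsto_id.const_mul_atTop hlam
      have h2 := Real.tendsto_exp_neg_atTop_nhds_zero.comp h1
      refine h2.congr (fun t => ?_)
      simp [Function.comp, neg_mul]
    refine ⟨_ - (diamN N (Hvec N K α Ω (Θ 0))/(K*m))*0,
      ((htend.sub (hexp.const_mul (diamN N (Hvec N K α Ω (Θ 0))/(K*m)))).congr' ?_)⟩
    filter_upwards [eventually_ge_atTop (0:ℝ)] with t ht
    rw [max_eq_left ht]
    ring
end

section
/- Let α ∈ [1/2, 1), β ∈ (0, 2α], θ* ∈ (0, π), and set c(α,β) = ((2α − β)/β)^{1/2}. Then for every ε > 0 with c(α,β)·ε < θ*, the regularized kernel h_ε(θ) = sin θ/(ε² + θ²)^α satisfies h_ε(θ) ≥ (h_ε(θ*)/θ*^β)·θ^β for every θ ∈ [c(α,β)·ε, θ*]. -/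
open Real Set

/-- Monotonicity of `x ↦ α log(ε²+x²) + (β-1) log x` on `[√((2α-β)/β)·ε, ∞)`. -/
lemma statement17_aux (α β ε a b : ℝ) (hα : 1 / 2 ≤ α) (hβ0 : 0 < β) (hβ2 : β ≤ 2 * α)
    (hε : 0 < ε) (ha : Real.sqrt ((2 * α - β) / β) * ε ≤ a) (ha0 : 0 < a) (hab : a ≤ b) :
    α * Real.log (ε ^ 2 + a ^ 2) + (β - 1) * Real.log a ≤
      α * Real.log (ε ^ 2 + b ^ 2) + (β - 1) * Real.log b := by
  set f : ℝ → ℝ := fun x => α * Real.log (ε ^ 2 + x ^ 2) + (β - 1) * Real.log x with hf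
  have hd : ∀ x ∈ Icc a b,
      HasDerivAt f (α * (2 * x / (ε ^ 2 + x ^ 2)) + (β - 1) * x⁻¹) x := by
    intro x hx
    have hx0 : 0 < x := lt_of_lt_of_le ha0 hx.1
    have hs : (0 : ℝ) < ε ^ 2 + x ^ 2 := by positivity
    have h1 : HasDerivAt (fun x : ℝ => ε ^ 2 + x ^ 2) (2 * x) x := by
      have := (hasDerivAt_pow 2 x).const_add (ε ^ 2)
      simpa using this
    have h2 : HasDerivAt (fun x : ℝ => Real.log (ε ^ 2 + x ^ 2))
        (2 * x / (ε ^ 2 + x ^ 2)) x := h1.log (ne_of_gt hs)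
    have h3 : HasDerivAt Real.log x⁻¹ x := Real.hasDerivAt_log (ne_of_gt hx0)
    exact (h2.const_mul α).add (h3.const_mul (β - 1))
  have hmono : MonotoneOn f (Icc a b) := by
    apply monotoneOn_of_deriv_nonneg (convex_Icc a b)
    · exact fun x hx => (hd x hx).continuousAt.continuousWithinAt
    · intro x hx
      rw [interior_Icc] at hx
      exact ((hd x (Ioo_subset_Icc_self hx)).differentiableAt).differentiableWithinAt
    · intro x hx
      rw [interior_Icc] at hx
      have hx' := Ioo_subset_Icc_self hx
      rw [(hd x hx').deriv]
      have hx0 : 0 < x := lt_of_lt_of_le ha0 hx'.1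
      have hs : (0 : ℝ) < ε ^ 2 + x ^ 2 := by positivity
      have hxx : Real.sqrt ((2 * α - β) / β) * ε ≤ x := le_trans ha hx'.1
      have hc2 : Real.sqrt ((2 * α - β) / β) ^ 2 = (2 * α - β) / β :=
        Real.sq_sqrt (div_nonneg (by linarith) hβ0.le)
      have hx2 : (2 * α - β) / β * ε ^ 2 ≤ x ^ 2 := by
        have h := mul_self_le_mul_self
          (mul_nonneg (Real.sqrt_nonneg _) hε.le) hxx
        nlinarith [h, hc2]
      have key : 0 ≤ (2 * α + β - 1) * x ^ 2 - (1 - β) * ε ^ 2 := by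
        have h4 : 0 ≤ 2 * α + β - 1 := by linarith
        have h5 : (2 * α - β) * ε ^ 2 ≤ β * x ^ 2 := by
          rw [div_mul_eq_mul_div, div_le_iff₀ hβ0] at hx2
          linarith [hx2]
        nlinarith [mul_le_mul_of_nonneg_left h5 h4, sq_nonneg ε, sq_nonneg x]
      have heq : α * (2 * x / (ε ^ 2 + x ^ 2)) + (β - 1) * x⁻¹ =
          ((2 * α + β - 1) * x ^ 2 - (1 - β) * ε ^ 2) / (x * (ε ^ 2 + x ^ 2)) := by
        field_simp
        ring
      rw [heq]
      exact div_nonneg key (by positivity)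
  exact hmono (left_mem_Icc.mpr hab) (right_mem_Icc.mpr hab) hab

/-- lower bound for the regularized kernel `h_ε(θ) = sin θ/(ε² + θ²)^α` in the
critical and supercritical regimes: for `θ ∈ [c(α,β)·ε, θ*]`,
`h_ε(θ) ≥ (h_ε(θ*)/θ*^β)·θ^β`. -/
theorem statement17 (α β θstar : ℝ) (hα : α ∈ Ico (1 / 2 : ℝ) 1)
    (hβ : β ∈ Ioc (0 : ℝ) (2 * α)) (hθstar : θstar ∈ Ioo (0 : ℝ) Real.pi)
    (c : ℝ) (hc : c = Real.sqrt ((2 * α - β) / β))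
    (ε : ℝ) (hε : 0 < ε) (hcε : c * ε < θstar) :
    ∀ θ ∈ Icc (c * ε) θstar,
      (Real.sin θstar / (ε ^ 2 + θstar ^ 2) ^ α / θstar ^ β) * θ ^ β ≤
        Real.sin θ / (ε ^ 2 + θ ^ 2) ^ α := by
  intro θ hθ
  obtain ⟨hθ1, hθ2⟩ := hθ
  have hθs0 : 0 < θstar := hθstar.1
  have hβ0 : 0 < β := hβ.1
  have hc0 : 0 ≤ c * ε := mul_nonneg (hc ▸ Real.sqrt_nonneg _) hε.le
  rcases eq_or_lt_of_le (le_trans hc0 hθ1) with h0 | hθ0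
  · -- θ = 0 case
    rw [← h0, Real.zero_rpow (ne_of_gt hβ0), Real.sin_zero, mul_zero, zero_div]
  -- θ > 0
  have hs : (0 : ℝ) < ε ^ 2 + θ ^ 2 := by positivity
  have hss : (0 : ℝ) < ε ^ 2 + θstar ^ 2 := by positivity
  have hA : (0 : ℝ) < (ε ^ 2 + θ ^ 2) ^ α := Real.rpow_pos_of_pos hs α
  have hB : (0 : ℝ) < (ε ^ 2 + θstar ^ 2) ^ α := Real.rpow_pos_of_pos hss α
  have hsinθ : 0 < Real.sin θ :=
    Real.sin_pos_of_pos_of_lt_pi hθ0 (lt_of_le_of_lt hθ2 hθstar.2)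
  have hsinθs : 0 < Real.sin θstar := Real.sin_pos_of_pos_of_lt_pi hθs0 hθstar.2
  -- Step 1: sin θ* · θ ≤ sin θ · θ*  (concavity of sin on [0, π])
  have hsin : Real.sin θstar * θ ≤ Real.sin θ * θstar := by
    have hcon := strictConcaveOn_sin_Icc.concaveOn
    have h0m : (0 : ℝ) ∈ Icc 0 Real.pi := ⟨le_refl 0, Real.pi_pos.le⟩
    have hsm : θstar ∈ Icc 0 Real.pi := ⟨hθs0.le, hθstar.2.le⟩
    have hb0 : 0 ≤ θ / θstar := by positivity
    have hb1 : θ / θstar ≤ 1 := (div_le_one hθs0).mpr hθ2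
    have := hcon.2 h0m hsm (by linarith : (0:ℝ) ≤ 1 - θ / θstar) hb0 (by ring)
    simp only [smul_eq_mul, mul_zero, Real.sin_zero, zero_add] at this
    have hθeq : (θ / θstar) * θstar = θ := div_mul_cancel₀ θ (ne_of_gt hθs0)
    rw [hθeq] at this
    have h2 : (θ / θstar) * Real.sin θstar ≤ Real.sin θ := by linarith
    calc Real.sin θstar * θ = ((θ / θstar) * Real.sin θstar) * θstar := by
          field_simp
      _ ≤ Real.sin θ * θstar := by
          exact mul_le_mul_of_nonneg_right h2 hθs0.le
  -- Step 2: θ^(β-1) (ε²+θ²)^α ≤ θ*^(β-1) (ε²+θ*²)^α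
  have hmono := statement17_aux α β ε θ θstar hα.1 hβ0 hβ.2 hε (hc ▸ hθ1) hθ0 hθ2
  have hstep2 : θ ^ (β - 1) * (ε ^ 2 + θ ^ 2) ^ α ≤
      θstar ^ (β - 1) * (ε ^ 2 + θstar ^ 2) ^ α := by
    have e1 : θ ^ (β - 1) * (ε ^ 2 + θ ^ 2) ^ α =
        Real.exp (α * Real.log (ε ^ 2 + θ ^ 2) + (β - 1) * Real.log θ) := by
      rw [Real.exp_add, Real.rpow_def_of_pos hθ0, Real.rpow_def_of_pos hs,
        mul_comm (Real.log θ) (β - 1), mul_comm (Real.log (ε ^ 2 + θ ^ 2)) α, mul_comm]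
    have e2 : θstar ^ (β - 1) * (ε ^ 2 + θstar ^ 2) ^ α =
        Real.exp (α * Real.log (ε ^ 2 + θstar ^ 2) + (β - 1) * Real.log θstar) := by
      rw [Real.exp_add, Real.rpow_def_of_pos hθs0, Real.rpow_def_of_pos hss,
        mul_comm (Real.log θstar) (β - 1), mul_comm (Real.log (ε ^ 2 + θstar ^ 2)) α, mul_comm]
    rw [e1, e2]
    exact Real.exp_le_exp.mpr hmono
  -- Combine
  rw [div_div, div_mul_eq_mul_div, div_le_div_iff₀ (by positivity) hA]
  have hsplit : ∀ x : ℝ, 0 < x → x ^ β = x * x ^ (β - 1) := by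
    intro x hx
    rw [show x * x ^ (β - 1) = x ^ (1 : ℝ) * x ^ (β - 1) from by rw [Real.rpow_one],
      ← Real.rpow_add hx]
    norm_num
  calc Real.sin θstar * θ ^ β * (ε ^ 2 + θ ^ 2) ^ α
      = (Real.sin θstar * θ) * (θ ^ (β - 1) * (ε ^ 2 + θ ^ 2) ^ α) := by
        rw [hsplit θ hθ0]; ring
    _ ≤ (Real.sin θ * θstar) * (θstar ^ (β - 1) * (ε ^ 2 + θstar ^ 2) ^ α) := by
        apply mul_le_mul hsin hstep2 (by positivity)
        exact mul_nonneg hsinθ.le hθs0.le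
    _ = Real.sin θ * ((ε ^ 2 + θstar ^ 2) ^ α * θstar ^ β) := by
        rw [hsplit θstar hθs0]; ring
end

section
/- Let F : ℝ^N → ℝ^N be measurable and locally essentially bounded, and suppose there exist a constant M > 0 and a Lebesgue-null set 𝒩₀ ⊆ ℝ^N such that (F(x) − F(y)) · (x − y) ≤ M·|x − y|² for all x, y ∈ ℝ^N ∖ 𝒩₀. Then the Filippov set-valued map ℱ of F satisfies the one-sided Lipschitz condition in the set-valued sense with the same constant: (X − Y) · (x − y) ≤ M·|x − y|² for every x, y ∈ ℝ^N, every X ∈ ℱ(x) and every Y ∈ ℱ(y). -/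
open Real Set Filter Topology MeasureTheory RealInnerProductSpace

/-- The Filippov set-valued map of a map `F`:
`ℱ(x) = ⋂_{δ>0} ⋂_{|𝒩|=0} closure (convexHull (F (B_δ(x) ∖ 𝒩)))`. -/
noncomputable def filippov {N : ℕ} (F : EuclideanSpace ℝ (Fin N) → EuclideanSpace ℝ (Fin N))
    (x : EuclideanSpace ℝ (Fin N)) : Set (EuclideanSpace ℝ (Fin N)) :=
  ⋂ (δ : ℝ) (_ : 0 < δ), ⋂ (𝒩 : Set (EuclideanSpace ℝ (Fin N))) (_ : MeasureTheory.volume 𝒩 = 0),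
    closure (convexHull ℝ (F '' (Metric.ball x δ \ 𝒩)))

lemma inner_le_of_mem_closure_convexHull {N : ℕ}
    {s : Set (EuclideanSpace ℝ (Fin N))} {w : EuclideanSpace ℝ (Fin N)} {c : ℝ}
    (h : ∀ a ∈ s, ⟪a, w⟫ ≤ c) {Z : EuclideanSpace ℝ (Fin N)}
    (hZ : Z ∈ closure (convexHull ℝ s)) : ⟪Z, w⟫ ≤ c := by
  have hconv : Convex ℝ {a : EuclideanSpace ℝ (Fin N) | ⟪a, w⟫ ≤ c} := by
    apply convex_halfSpace_le
    exact ⟨fun a b => inner_add_left a b w, fun r a => real_inner_smul_left a w r⟩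
  have hclosed : IsClosed {a : EuclideanSpace ℝ (Fin N) | ⟪a, w⟫ ≤ c} :=
    isClosed_le (continuous_id.inner continuous_const) continuous_const
  exact closure_minimal (convexHull_min h hconv) hclosed hZ

lemma le_inner_of_mem_closure_convexHull {N : ℕ}
    {s : Set (EuclideanSpace ℝ (Fin N))} {w : EuclideanSpace ℝ (Fin N)} {c : ℝ}
    (h : ∀ a ∈ s, c ≤ ⟪a, w⟫) {Z : EuclideanSpace ℝ (Fin N)}
    (hZ : Z ∈ closure (convexHull ℝ s)) : c ≤ ⟪Z, w⟫ := by
  have := inner_le_of_mem_closure_convexHull (w := -w) (c := -c)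
    (fun a ha => by rw [inner_neg_right]; linarith [h a ha]) hZ
  rw [inner_neg_right] at this; linarith

/-- if a measurable, locally essentially bounded map `F` satisfies a one-sided
Lipschitz condition off a Lebesgue-null set, then its Filippov set-valued map satisfies the
one-sided Lipschitz condition in the set-valued sense with the same constant. -/
theorem statement18 (N : ℕ) (F : EuclideanSpace ℝ (Fin N) → EuclideanSpace ℝ (Fin N))
    (hmeas : Measurable F)
    (hloc : ∀ x : EuclideanSpace ℝ (Fin N), ∃ U ∈ nhds x, ∃ C : ℝ,
      ∀ᵐ y ∂volume, y ∈ U → ‖F y‖ ≤ C)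
    (M : ℝ) (hM : 0 < M)
    (𝒩₀ : Set (EuclideanSpace ℝ (Fin N))) (h𝒩₀ : volume 𝒩₀ = 0)
    (hosl : ∀ x ∉ 𝒩₀, ∀ y ∉ 𝒩₀, ⟪F x - F y, x - y⟫ ≤ M * ‖x - y‖ ^ 2) :
    ∀ x y X Y : EuclideanSpace ℝ (Fin N), X ∈ filippov F x → Y ∈ filippov F y →
      ⟪X - Y, x - y⟫ ≤ M * ‖x - y‖ ^ 2 := by
  intro x y X Y hX hY
  obtain ⟨U₁, hU₁, C₁, hC₁⟩ := hloc x
  obtain ⟨U₂, hU₂, C₂, hC₂⟩ := hloc y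
  obtain ⟨δ₁, hδ₁pos, hδ₁⟩ := Metric.mem_nhds_iff.mp hU₁
  obtain ⟨δ₂, hδ₂pos, hδ₂⟩ := Metric.mem_nhds_iff.mp hU₂
  set 𝒩₁ := {z | ¬ (z ∈ U₁ → ‖F z‖ ≤ C₁)} with h𝒩₁def
  set 𝒩₂ := {z | ¬ (z ∈ U₂ → ‖F z‖ ≤ C₂)} with h𝒩₂def
  have h𝒩₁ : volume 𝒩₁ = 0 := hC₁
  have h𝒩₂ : volume 𝒩₂ = 0 := hC₂
  set 𝒩 := 𝒩₀ ∪ 𝒩₁ ∪ 𝒩₂ with h𝒩def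
  have h𝒩 : volume 𝒩 = 0 :=
    measure_union_null (measure_union_null h𝒩₀ h𝒩₁) h𝒩₂
  set C₁' := max C₁ 0 with hC₁'def
  set C₂' := max C₂ 0 with hC₂'def
  have hC₁'0 : 0 ≤ C₁' := le_max_right _ _
  have hC₂'0 : 0 ≤ C₂' := le_max_right _ _
  refine le_of_forall_pos_le_add ?_
  intro ε hε
  -- choose δ
  set D := 4 * M * ‖x - y‖ + 4 * M + 2 * (C₁' + C₂') + 1 with hDdef
  have hD : 0 < D := by positivity
  set δ := min (min δ₁ δ₂) (min 1 (ε / D)) with hδdef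
  have hδpos : 0 < δ := by
    apply lt_min (lt_min hδ₁pos hδ₂pos) (lt_min one_pos (div_pos hε hD))
  have hδ1 : δ ≤ δ₁ := le_trans (min_le_left _ _) (min_le_left _ _)
  have hδ2 : δ ≤ δ₂ := le_trans (min_le_left _ _) (min_le_right _ _)
  have hδle1 : δ ≤ 1 := le_trans (min_le_right _ _) (min_le_left _ _)
  have hδleε : δ * D ≤ ε := by
    have h1 : δ ≤ ε / D := le_trans (min_le_right _ _) (min_le_right _ _)
    calc δ * D ≤ (ε / D) * D := by nlinarith
    _ = ε := div_mul_cancel₀ ε (ne_of_gt hD)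
  have hbound : M * (‖x - y‖ + 2 * δ) ^ 2 + (C₁' + C₂') * (2 * δ)
      ≤ M * ‖x - y‖ ^ 2 + ε := by
    have hn : 0 ≤ ‖x - y‖ := norm_nonneg _
    nlinarith [sq_nonneg δ, mul_pos hM hδpos]
  -- specialize memberships
  simp only [filippov, mem_iInter] at hX hY
  have hX' := hX δ hδpos 𝒩 h𝒩
  have hY' := hY δ hδpos 𝒩 h𝒩
  -- key pointwise bound
  have key : ∀ u ∈ Metric.ball x δ \ 𝒩, ∀ v ∈ Metric.ball y δ \ 𝒩,
      ⟪F u - F v, x - y⟫ ≤ M * ‖x - y‖ ^ 2 + ε := by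
    intro u hu v hv
    obtain ⟨hu_ball, hu_not⟩ := hu
    obtain ⟨hv_ball, hv_not⟩ := hv
    have hu0 : u ∉ 𝒩₀ := fun h => hu_not (Or.inl (Or.inl h))
    have hv0 : v ∉ 𝒩₀ := fun h => hv_not (Or.inl (Or.inl h))
    have huU : u ∈ U₁ := hδ₁ (Metric.ball_subset_ball hδ1 hu_ball)
    have hvU : v ∈ U₂ := hδ₂ (Metric.ball_subset_ball hδ2 hv_ball)
    have hFu : ‖F u‖ ≤ C₁' := by
      have : u ∉ 𝒩₁ := fun h => hu_not (Or.inl (Or.inr h))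
      have := not_not.mp (fun h => this h)
      exact le_trans (this huU) (le_max_left _ _)
    have hFv : ‖F v‖ ≤ C₂' := by
      have : v ∉ 𝒩₂ := fun h => hv_not (Or.inr h)
      have := not_not.mp (fun h => this h)
      exact le_trans (this hvU) (le_max_left _ _)
    have hux : ‖u - x‖ < δ := by
      rw [← dist_eq_norm]; exact Metric.mem_ball.mp hu_ball
    have hvy : ‖v - y‖ < δ := by
      rw [← dist_eq_norm]; exact Metric.mem_ball.mp hv_ball
    have hsplit : ⟪F u - F v, x - y⟫
        = ⟪F u - F v, u - v⟫ + ⟪F u - F v, (x - y) - (u - v)⟫ := by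
      rw [← inner_add_right]; congr 1; abel
    have h1 : ⟪F u - F v, u - v⟫ ≤ M * ‖u - v‖ ^ 2 := hosl u hu0 v hv0
    have huv : ‖u - v‖ ≤ ‖x - y‖ + 2 * δ := by
      have : u - v = (x - y) + ((u - x) - (v - y)) := by abel
      rw [this]
      calc ‖(x - y) + ((u - x) - (v - y))‖ ≤ ‖x - y‖ + ‖(u - x) - (v - y)‖ :=
            norm_add_le _ _
        _ ≤ ‖x - y‖ + (‖u - x‖ + ‖v - y‖) := by
            gcongr; exact norm_sub_le _ _
        _ ≤ ‖x - y‖ + 2 * δ := by linarith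
    have hdiff : ‖(x - y) - (u - v)‖ ≤ 2 * δ := by
      have : (x - y) - (u - v) = (x - u) - (y - v) := by abel
      rw [this]
      calc ‖(x - u) - (y - v)‖ ≤ ‖x - u‖ + ‖y - v‖ := norm_sub_le _ _
        _ ≤ 2 * δ := by
            rw [norm_sub_rev x u, norm_sub_rev y v]; linarith
    have h2 : ⟪F u - F v, (x - y) - (u - v)⟫ ≤ (C₁' + C₂') * (2 * δ) := by
      calc ⟪F u - F v, (x - y) - (u - v)⟫ ≤ ‖F u - F v‖ * ‖(x - y) - (u - v)‖ :=
            real_inner_le_norm _ _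
        _ ≤ (C₁' + C₂') * (2 * δ) := by
            have := norm_sub_le (F u) (F v)
            have hnn : (0:ℝ) ≤ ‖F u - F v‖ := norm_nonneg _
            gcongr <;> linarith
    have h3 : M * ‖u - v‖ ^ 2 ≤ M * (‖x - y‖ + 2 * δ) ^ 2 :=
      mul_le_mul_of_nonneg_left (pow_le_pow_left₀ (norm_nonneg _) huv 2) hM.le
    rw [hsplit]
    linarith
  -- now the double approximation
  have hXbound : ∀ b ∈ F '' (Metric.ball y δ \ 𝒩),
      ⟪X, x - y⟫ ≤ M * ‖x - y‖ ^ 2 + ε + ⟪b, x - y⟫ := by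
    intro b hb
    obtain ⟨v, hv, rfl⟩ := hb
    refine inner_le_of_mem_closure_convexHull ?_ hX'
    intro a ha
    obtain ⟨u, hu, rfl⟩ := ha
    have := key u hu v hv
    rw [inner_sub_left] at this
    linarith
  have hYlow : ⟪X, x - y⟫ - (M * ‖x - y‖ ^ 2 + ε) ≤ ⟪Y, x - y⟫ := by
    refine le_inner_of_mem_closure_convexHull ?_ hY'
    intro b hb
    linarith [hXbound b hb]
  rw [inner_sub_left]
  linarith
end
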